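/- arXiv:1707.06763 — 6 statements merged into one kernel-verified Lean document; each statement's English description precedes it below -/
import Mathlib

section
/- For n ≥ 2, the map φ on vertices of CQ_n defined by negating the most significant bit, φ(u) = f_{n-1}(u), is a graph automorphism of CQ_n. -/
/-- The pair-related relation on 2-bit strings `(x₂, x₁)`. -/
def pairRel (a b : Bool × Bool) : Prop :=
  (a = (false, false) ∧ b = (false, false)) ∨
  (a = (true, false) ∧ b = (true, false)) ∨
  (a = (false, true) ∧ b = (true, true)) ∨
  (a = (true, true) ∧ b = (false, true))

/-- Bit `i` of a length-`n` address (`false` out of range). -/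
def bitOf {n : ℕ} (u : Fin n → Bool) (i : ℕ) : Bool :=
  if h : i < n then u ⟨i, h⟩ else false

/-- `u` and `v` are adjacent along dimension `x` in the crossed cube. -/
def adjAlong (n : ℕ) (u v : Fin n → Bool) (x : ℕ) : Prop :=
  x < n ∧
  bitOf v x = !(bitOf u x) ∧
  (x % 2 = 1 → bitOf v (x - 1) = bitOf u (x - 1)) ∧
  (∀ i, x < i → bitOf u i = bitOf v i) ∧
  (∀ i, 2 * i + 1 < x →
    pairRel (bitOf u (2 * i + 1), bitOf u (2 * i)) (bitOf v (2 * i + 1), bitOf v (2 * i)))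

/-- The `n`-dimensional crossed cube. -/
def CQ (n : ℕ) : SimpleGraph (Fin n → Bool) where
  Adj u v := ∃ x, adjAlong n u v x ∨ adjAlong n v u x
  symm := by constructor; rintro u v ⟨x, h | h⟩; exacts [⟨x, Or.inr h⟩, ⟨x, Or.inl h⟩]
  loopless := by
    constructor
    rintro u ⟨x, h | h⟩ <;>
    · obtain ⟨-, h2, -⟩ := h
      simp at h2

/-- `fneg n i u` negates bit `i` of `u`. -/
def fneg (n i : ℕ) (u : Fin n → Bool) : Fin n → Bool :=
  fun j => if (j : ℕ) = i then !(u j) else u j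

/-- `φ` is an automorphism of `CQ n`. -/
def IsAut (n : ℕ) (φ : (Fin n → Bool) → (Fin n → Bool)) : Prop :=
  Function.Bijective φ ∧ ∀ u v, (CQ n).Adj u v ↔ (CQ n).Adj (φ u) (φ v)

/-- Vertices in the same orbit of the automorphism group. -/
def orbitSetoid (n : ℕ) : Setoid (Fin n → Bool) where
  r u v := ∃ φ : CQ n ≃g CQ n, φ u = v
  iseqv := by
    refine ⟨fun u => ⟨RelIso.refl (CQ n).Adj, rfl⟩, ?_, ?_⟩
    · rintro u v ⟨φ, h⟩
      exact ⟨φ.symm, by rw [← h]; exact φ.symm_apply_apply u⟩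
    · rintro u v w ⟨φ, h⟩ ⟨ψ, h'⟩
      exact ⟨RelIso.trans φ ψ, by simp [RelIso.trans_apply, h, h']⟩

/-- The orbit number of `CQ n`. -/
noncomputable def Orb (n : ℕ) : ℕ := Nat.card (Quotient (orbitSetoid n))

/-- There is a path on exactly 4 vertices from `x` to `y` in `CQ n`. -/
def hasP4 (n : ℕ) (x y : Fin n → Bool) : Prop :=
  ∃ a b, (CQ n).Adj x a ∧ (CQ n).Adj a b ∧ (CQ n).Adj b y ∧
    x ≠ a ∧ x ≠ b ∧ x ≠ y ∧ a ≠ b ∧ a ≠ y ∧ b ≠ y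

/-- The automorphism in Lemma 4 (odd `n ≥ 3`). -/
def phiOdd (n : ℕ) (u : Fin n → Bool) : Fin n → Bool :=
  if bitOf u (n - 1) = false then fneg n (n - 3) u
  else fneg n (n - 3) (fneg n (n - 2) u)

/-- The automorphism in Lemma 5 (even `n ≥ 4`). -/
def phiEven (n : ℕ) (u : Fin n → Bool) : Fin n → Bool :=
  if (bitOf u (n-1) = false ∧ bitOf u (n-2) = true  ∧ bitOf u (n-3) = false ∧ bitOf u (n-4) = false) ∨
     (bitOf u (n-1) = true  ∧ bitOf u (n-2) = false ∧ bitOf u (n-3) = false ∧ bitOf u (n-4) = false) ∨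
     (bitOf u (n-1) = false ∧ bitOf u (n-2) = true  ∧ bitOf u (n-3) = true  ∧ bitOf u (n-4) = true) ∨
     (bitOf u (n-1) = true  ∧ bitOf u (n-2) = false ∧ bitOf u (n-3) = true  ∧ bitOf u (n-4) = true)
  then fneg n (n-4) (fneg n (n-3) u) else fneg n (n-4) u

/-- Append two zero bits at the low end. -/
def ext2 {n : ℕ} (v : Fin n → Bool) : Fin (n + 2) → Bool :=
  fun j => if h : 2 ≤ (j : ℕ) then v ⟨(j : ℕ) - 2, by have := j.isLt; omega⟩ else false

/-- Delete the two least significant bits. -/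
def drop2 {n : ℕ} (w : Fin (n + 2) → Bool) : Fin n → Bool :=
  fun j => w ⟨(j : ℕ) + 2, by have := j.isLt; omega⟩

lemma fneg_invol (n i : ℕ) (u : Fin n → Bool) : fneg n i (fneg n i u) = u := by
  funext j
  unfold fneg
  by_cases h : (j : ℕ) = i <;> simp [h]

lemma bitOf_fneg_ne {n i : ℕ} (u : Fin n → Bool) {k : ℕ} (h : k ≠ i) :
    bitOf (fneg n i u) k = bitOf u k := by
  unfold bitOf fneg
  split <;> simp [h]

lemma bitOf_fneg_eq {n i : ℕ} (u : Fin n → Bool) :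
    bitOf (fneg n i u) i = if i < n then !(bitOf u i) else false := by
  unfold bitOf fneg
  split <;> simp_all

lemma adjAlong_fneg_msb {n : ℕ} (hn : 2 ≤ n) {u v : Fin n → Bool} {x : ℕ}
    (h : adjAlong n u v x) :
    adjAlong n (fneg n (n - 1) u) (fneg n (n - 1) v) x := by
  obtain ⟨hx, h2, h3, h4, h5⟩ := h
  refine ⟨hx, ?_, ?_, ?_, ?_⟩
  · by_cases hxe : x = n - 1
    · subst hxe
      rw [bitOf_fneg_eq, bitOf_fneg_eq, if_pos hx, if_pos hx, h2]
    · rw [bitOf_fneg_ne u hxe, bitOf_fneg_ne v hxe, h2]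
  · intro hodd
    have hne : x - 1 ≠ n - 1 := by omega
    rw [bitOf_fneg_ne u hne, bitOf_fneg_ne v hne]
    exact h3 hodd
  · intro i hi
    by_cases hie : i = n - 1
    · subst hie
      rw [bitOf_fneg_eq, bitOf_fneg_eq, h4 _ hi]
    · rw [bitOf_fneg_ne u hie, bitOf_fneg_ne v hie]
      exact h4 _ hi
  · intro i hi
    have h1 : 2 * i + 1 ≠ n - 1 := by omega
    have h0 : 2 * i ≠ n - 1 := by omega
    rw [bitOf_fneg_ne u h1, bitOf_fneg_ne v h1, bitOf_fneg_ne u h0, bitOf_fneg_ne v h0]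
    exact h5 _ hi

/-- for `n ≥ 2`, negating the most significant bit is an automorphism of `CQ n`. -/
theorem fneg_msb_isAut (n : ℕ) (hn : 2 ≤ n) :
    IsAut n (fneg n (n - 1)) := by
  constructor
  · exact Function.Involutive.bijective (fneg_invol n (n - 1))
  · intro u v
    constructor
    · rintro ⟨x, h | h⟩
      · exact ⟨x, Or.inl (adjAlong_fneg_msb hn h)⟩
      · exact ⟨x, Or.inr (adjAlong_fneg_msb hn h)⟩
    · rintro ⟨x, h | h⟩
      · refine ⟨x, Or.inl ?_⟩
        have := adjAlong_fneg_msb hn h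
        rwa [fneg_invol, fneg_invol] at this
      · refine ⟨x, Or.inr ?_⟩
        have := adjAlong_fneg_msb hn h
        rwa [fneg_invol, fneg_invol] at this
end

section
/- For odd n ≥ 3, the map φ on vertices of CQ_n defined by φ(u) = f_{n-3}(u) if u_{n-1} = 0, and φ(u) = f_{n-3}(f_{n-2}(u)) otherwise, is a graph automorphism of CQ_n. -/
lemma bitOf_fneg {n : ℕ} (i : ℕ) (hi : i < n) (u : Fin n → Bool) (j : ℕ) :
    bitOf (fneg n i u) j = if j = i then !(bitOf u j) else bitOf u j := by
  unfold bitOf fneg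
  by_cases h : j < n
  · simp [h]
  · simp [h, show j ≠ i from by omega]

lemma bitOf_phiOdd {n : ℕ} (hn : 3 ≤ n) (u : Fin n → Bool) (j : ℕ) :
    bitOf (phiOdd n u) j =
      if j = n - 3 then !(bitOf u j)
      else if j = n - 2 ∧ bitOf u (n - 1) = true then !(bitOf u j)
      else bitOf u j := by
  have h3 : n - 3 < n := by omega
  have h2 : n - 2 < n := by omega
  unfold phiOdd
  by_cases hA : bitOf u (n - 1) = false
  · rw [if_pos hA, bitOf_fneg _ h3]
    simp [hA]
  · rw [if_neg hA, bitOf_fneg _ h3, bitOf_fneg _ h2]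
    simp only [eq_true_of_ne_false hA, and_true]
    split_ifs with e1 e2 <;> simp_all <;> try omega

lemma bitOf_phiOdd_ne {n : ℕ} (hn : 3 ≤ n) (u : Fin n → Bool) (j : ℕ)
    (h1 : j ≠ n - 3) (h2 : j ≠ n - 2) :
    bitOf (phiOdd n u) j = bitOf u j := by
  rw [bitOf_phiOdd hn, if_neg h1, if_neg (by rintro ⟨h, -⟩; exact h2 h)]

lemma bitOf_phiOdd_C {n : ℕ} (hn : 3 ≤ n) (u : Fin n → Bool) :
    bitOf (phiOdd n u) (n - 3) = !(bitOf u (n - 3)) := by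
  rw [bitOf_phiOdd hn, if_pos rfl]

lemma bitOf_phiOdd_B {n : ℕ} (hn : 3 ≤ n) (u : Fin n → Bool) :
    bitOf (phiOdd n u) (n - 2) =
      if bitOf u (n - 1) = true then !(bitOf u (n - 2)) else bitOf u (n - 2) := by
  rw [bitOf_phiOdd hn, if_neg (by omega)]
  split_ifs with e1 e2 <;> simp_all

lemma bitOf_phiOdd_A {n : ℕ} (hn : 3 ≤ n) (u : Fin n → Bool) :
    bitOf (phiOdd n u) (n - 1) = bitOf u (n - 1) :=
  bitOf_phiOdd_ne hn u _ (by omega) (by omega)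

lemma phiOdd_invol {n : ℕ} (hn : 3 ≤ n) : Function.Involutive (phiOdd n) := by
  intro u
  funext j
  have hb : ∀ (w : Fin n → Bool), w j = bitOf w (j : ℕ) := by
    intro w; simp [bitOf, j.isLt]
  rw [hb (phiOdd n (phiOdd n u)), hb u]
  by_cases hC : (j : ℕ) = n - 3
  · rw [hC, bitOf_phiOdd_C hn, bitOf_phiOdd_C hn, Bool.not_not]
  by_cases hB : (j : ℕ) = n - 2
  · rw [hB, bitOf_phiOdd_B hn, bitOf_phiOdd_A hn, bitOf_phiOdd_B hn]
    split_ifs <;> simp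
  · rw [bitOf_phiOdd_ne hn _ _ hC hB, bitOf_phiOdd_ne hn _ _ hC hB]

lemma phiOdd_adjAlong {n : ℕ} (hn : 3 ≤ n) (hodd : n % 2 = 1)
    (u v : Fin n → Bool) (x : ℕ) (h : adjAlong n u v x) :
    adjAlong n (phiOdd n u) (phiOdd n v) x := by
  obtain ⟨hx, h2, h3, h4, h5⟩ := h
  rcases (show x < n - 3 ∨ x = n - 3 ∨ x = n - 2 ∨ x = n - 1 from by omega) with hc | hc | hc | hc
  · -- x < n - 3
    have hA := h4 (n - 1) (by omega)
    have hB := h4 (n - 2) (by omega)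
    have hC := h4 (n - 3) (by omega)
    refine ⟨hx, ?_, ?_, ?_, ?_⟩
    · rw [bitOf_phiOdd_ne hn _ _ (by omega) (by omega),
        bitOf_phiOdd_ne hn _ _ (by omega) (by omega)]
      exact h2
    · intro hp
      rw [bitOf_phiOdd_ne hn _ _ (by omega) (by omega),
        bitOf_phiOdd_ne hn _ _ (by omega) (by omega)]
      exact h3 hp
    · intro i hi
      by_cases e1 : i = n - 3
      · rw [e1, bitOf_phiOdd_C hn, bitOf_phiOdd_C hn, ← e1, h4 i hi]
      by_cases e2 : i = n - 2
      · rw [e2, bitOf_phiOdd_B hn, bitOf_phiOdd_B hn, hA, hB]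
      · rw [bitOf_phiOdd_ne hn _ _ e1 e2, bitOf_phiOdd_ne hn _ _ e1 e2]
        exact h4 i hi
    · intro i hi
      rw [bitOf_phiOdd_ne hn u _ (by omega) (by omega),
        bitOf_phiOdd_ne hn u _ (by omega) (by omega),
        bitOf_phiOdd_ne hn v _ (by omega) (by omega),
        bitOf_phiOdd_ne hn v _ (by omega) (by omega)]
      exact h5 i hi
  · -- x = n - 3
    subst hc
    have hA := h4 (n - 1) (by omega)
    have hB := h4 (n - 2) (by omega)
    refine ⟨hx, ?_, ?_, ?_, ?_⟩
    · rw [bitOf_phiOdd_C hn, bitOf_phiOdd_C hn, h2]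
    · intro hp; exfalso; omega
    · intro i hi
      by_cases e2 : i = n - 2
      · rw [e2, bitOf_phiOdd_B hn, bitOf_phiOdd_B hn, hA, hB]
      · rw [bitOf_phiOdd_ne hn _ _ (by omega) e2, bitOf_phiOdd_ne hn _ _ (by omega) e2]
        exact h4 i hi
    · intro i hi
      rw [bitOf_phiOdd_ne hn u _ (by omega) (by omega),
        bitOf_phiOdd_ne hn u _ (by omega) (by omega),
        bitOf_phiOdd_ne hn v _ (by omega) (by omega),
        bitOf_phiOdd_ne hn v _ (by omega) (by omega)]
      exact h5 i hi
  · -- x = n - 2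
    subst hc
    have hA := h4 (n - 1) (by omega)
    have hC := h3 (by omega)
    rw [show n - 2 - 1 = n - 3 from by omega] at hC
    refine ⟨hx, ?_, ?_, ?_, ?_⟩
    · rw [bitOf_phiOdd_B hn, bitOf_phiOdd_B hn, ← hA, h2]
      split_ifs <;> simp
    · intro hp
      rw [show n - 2 - 1 = n - 3 from by omega, bitOf_phiOdd_C hn, bitOf_phiOdd_C hn, hC]
    · intro i hi
      rw [bitOf_phiOdd_ne hn _ _ (by omega) (by omega),
        bitOf_phiOdd_ne hn _ _ (by omega) (by omega)]
      exact h4 i hi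
    · intro i hi
      rw [bitOf_phiOdd_ne hn u _ (by omega) (by omega),
        bitOf_phiOdd_ne hn u _ (by omega) (by omega),
        bitOf_phiOdd_ne hn v _ (by omega) (by omega),
        bitOf_phiOdd_ne hn v _ (by omega) (by omega)]
      exact h5 i hi
  · -- x = n - 1
    subst hc
    refine ⟨hx, ?_, ?_, ?_, ?_⟩
    · rw [bitOf_phiOdd_A hn, bitOf_phiOdd_A hn]
      exact h2
    · intro hp; exfalso; omega
    · intro i hi
      rw [bitOf_phiOdd_ne hn _ _ (by omega) (by omega),
        bitOf_phiOdd_ne hn _ _ (by omega) (by omega)]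
      exact h4 i hi
    · intro i hi
      by_cases e : 2 * i + 1 = n - 2
      · have e2 : 2 * i = n - 3 := by omega
        have hp := h5 i hi
        rw [e, e2] at hp ⊢
        rw [bitOf_phiOdd_B hn, bitOf_phiOdd_B hn, bitOf_phiOdd_C hn, bitOf_phiOdd_C hn]
        rw [h2]
        unfold pairRel at hp ⊢
        rcases hp with ⟨e1, f1⟩ | ⟨e1, f1⟩ | ⟨e1, f1⟩ | ⟨e1, f1⟩ <;>
          simp only [Prod.mk.injEq] at e1 f1 <;>
          obtain ⟨e1a, e1b⟩ := e1 <;> obtain ⟨f1a, f1b⟩ := f1 <;>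
          rw [e1a, e1b, f1a, f1b] <;>
          cases hu : bitOf u (n - 1) <;> simp
      · rw [bitOf_phiOdd_ne hn u _ (by omega) e,
          bitOf_phiOdd_ne hn u _ (by omega) (by omega),
          bitOf_phiOdd_ne hn v _ (by omega) e,
          bitOf_phiOdd_ne hn v _ (by omega) (by omega)]
        exact h5 i hi

lemma phiOdd_adj {n : ℕ} (hn : 3 ≤ n) (hodd : n % 2 = 1)
    (u v : Fin n → Bool) (h : (CQ n).Adj u v) :
    (CQ n).Adj (phiOdd n u) (phiOdd n v) := by
  obtain ⟨x, h | h⟩ := h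
  · exact ⟨x, Or.inl (phiOdd_adjAlong hn hodd u v x h)⟩
  · exact ⟨x, Or.inr (phiOdd_adjAlong hn hodd v u x h)⟩

/-- for odd `n ≥ 3`, the map `phiOdd n` is an automorphism of `CQ n`. -/
theorem phiOdd_isAut (n : ℕ) (hn : 3 ≤ n) (hodd : n % 2 = 1) :
    IsAut n (phiOdd n) := by
  refine ⟨(phiOdd_invol hn).bijective, fun u v => ⟨phiOdd_adj hn hodd u v, fun h => ?_⟩⟩
  have := phiOdd_adj hn hodd _ _ h
  rwa [phiOdd_invol hn, phiOdd_invol hn] at this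
end

section
/- For n ≥ 5, if u is an even vertex of CQ_n (the numerical value of its address is even, i.e., u_0 = 0), then the P₄-graph of the open neighborhood N(u) contains a clique on 4 vertices: there exist four distinct vertices w, x, y, z ∈ N(u) such that between every pair of them there is a path on 4 vertices in CQ_n. -/
/-- Auxiliary: xor a mask (given as a natural number) onto an address. -/
def XM {n : ℕ} (u : Fin n → Bool) (m : ℕ) : Fin n → Bool :=
  fun j => xor (m.testBit (j : ℕ)) (u j)

lemma bitOf_XM (n : ℕ) (hn : 5 ≤ n) (u : Fin n → Bool) (m : ℕ) (hm : m < 32) (i : ℕ) :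
    bitOf (XM u m) i = xor (m.testBit i) (bitOf u i) := by
  unfold bitOf XM
  split
  · rfl
  · rename_i h
    have : m.testBit i = false :=
      Nat.testBit_lt_two_pow (lt_of_lt_of_le hm
        (le_trans (by norm_num : (32:ℕ) ≤ 2 ^ 5) (Nat.pow_le_pow_right (by norm_num) (by omega))))
    simp [this]

lemma XM_inj (n : ℕ) (hn : 5 ≤ n) (u : Fin n → Bool) {m m' : ℕ}
    (hm : m < 32) (hm' : m' < 32) (h : XM u m = XM u m') : m = m' := by
  refine Nat.eq_of_testBit_eq fun i => ?_
  by_cases hi : i < n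
  · have h2 := congrFun h ⟨i, hi⟩
    simp only [XM] at h2
    cases u ⟨i, hi⟩ <;> simpa using h2
  · have h5 : 5 ≤ i := by omega
    rw [Nat.testBit_lt_two_pow (lt_of_lt_of_le hm
        (le_trans (by norm_num : (32:ℕ) ≤ 2 ^ 5) (Nat.pow_le_pow_right (by norm_num) h5))),
      Nat.testBit_lt_two_pow (lt_of_lt_of_le hm'
        (le_trans (by norm_num : (32:ℕ) ≤ 2 ^ 5) (Nat.pow_le_pow_right (by norm_num) h5)))]

lemma XM_ne (n : ℕ) (hn : 5 ≤ n) (u : Fin n → Bool) {m m' : ℕ}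
    (hm : m < 32) (hm' : m' < 32) (h : m ≠ m') : XM u m ≠ XM u m' :=
  fun he => h (XM_inj n hn u hm hm' he)

lemma adjXM (n : ℕ) (hn : 5 ≤ n) (u : Fin n → Bool) (hu : bitOf u 0 = false)
    (m m' x : ℕ) (hm : m < 32) (hm' : m' < 32) (hx : x < 5)
    (h1 : m'.testBit x = !m.testBit x)
    (h2 : x % 2 = 1 → m'.testBit (x - 1) = m.testBit (x - 1))
    (h3 : m >>> (x + 1) = m' >>> (x + 1))
    (h40 : 1 < x → (m'.testBit 0 = m.testBit 0 ∧
        (m.testBit 0 = false → m'.testBit 1 = m.testBit 1) ∧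
        (m.testBit 0 = true → m'.testBit 1 = !m.testBit 1)))
    (h41 : 3 < x → (m'.testBit 2 = m.testBit 2 ∧
        (xor (m.testBit 2) (bitOf u 2) = false → m'.testBit 3 = m.testBit 3) ∧
        (xor (m.testBit 2) (bitOf u 2) = true → m'.testBit 3 = !m.testBit 3))) :
    (CQ n).Adj (XM u m) (XM u m') := by
  have B := bitOf_XM n hn u m hm
  have B' := bitOf_XM n hn u m' hm'
  refine ⟨x, Or.inl ⟨by omega, ?_, ?_, ?_, ?_⟩⟩
  · rw [B, B', h1]; cases m.testBit x <;> cases bitOf u x <;> rfl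
  · intro hodd; rw [B, B', h2 hodd]
  · intro i hi
    rw [B, B']
    congr 1
    have e1 : m.testBit i = (m >>> (x + 1)).testBit (i - (x + 1)) := by
      rw [Nat.testBit_shiftRight]; congr 1; omega
    have e2 : m'.testBit i = (m' >>> (x + 1)).testBit (i - (x + 1)) := by
      rw [Nat.testBit_shiftRight]; congr 1; omega
    rw [e1, e2, h3]
  · intro i hi
    have hcase : i = 0 ∨ i = 1 := by omega
    rcases hcase with rfl | rfl
    · obtain ⟨c0, cf, ct⟩ := h40 (by omega)
      show pairRel (bitOf (XM u m) 1, bitOf (XM u m) 0) (bitOf (XM u m') 1, bitOf (XM u m') 0)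
      rw [B, B', B, B', hu, c0]
      cases h0 : m.testBit 0
      · rw [cf h0]
        cases m.testBit 1 <;> cases bitOf u 1 <;> simp [pairRel]
      · rw [ct h0]
        cases m.testBit 1 <;> cases bitOf u 1 <;> simp [pairRel]
    · obtain ⟨c2, cf, ct⟩ := h41 (by omega)
      show pairRel (bitOf (XM u m) 3, bitOf (XM u m) 2) (bitOf (XM u m') 3, bitOf (XM u m') 2)
      rw [B, B', B, B', c2]
      cases hc : xor (m.testBit 2) (bitOf u 2)
      · rw [cf hc]
        cases m.testBit 3 <;> cases bitOf u 3 <;> simp [pairRel]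
      · rw [ct hc]
        cases m.testBit 3 <;> cases bitOf u 3 <;> simp [pairRel]

lemma XM_zero {n : ℕ} (u : Fin n → Bool) : XM u 0 = u :=
  funext fun j => by simp [XM]

/-- for `n ≥ 5` and an even vertex `u` of `CQ n`, the `P₄`-graph of
`N(u)` contains a `K₄`. -/
theorem even_vertex_P4_K4 (n : ℕ) (hn : 5 ≤ n) (u : Fin n → Bool)
    (hu : bitOf u 0 = false) :
    ∃ w x y z : Fin n → Bool,
      (CQ n).Adj u w ∧ (CQ n).Adj u x ∧ (CQ n).Adj u y ∧ (CQ n).Adj u z ∧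
      w ≠ x ∧ w ≠ y ∧ w ≠ z ∧ x ≠ y ∧ x ≠ z ∧ y ≠ z ∧
      hasP4 n w x ∧ hasP4 n w y ∧ hasP4 n w z ∧
      hasP4 n x y ∧ hasP4 n x z ∧ hasP4 n y z := by
  have E : ∀ m m' x : ℕ, x < 4 →
      (m < 32 ∧ m' < 32 ∧ m'.testBit x = !m.testBit x ∧
       (x % 2 = 1 → m'.testBit (x - 1) = m.testBit (x - 1)) ∧
       m >>> (x + 1) = m' >>> (x + 1) ∧
       (1 < x → (m'.testBit 0 = m.testBit 0 ∧
         (m.testBit 0 = false → m'.testBit 1 = m.testBit 1) ∧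
         (m.testBit 0 = true → m'.testBit 1 = !m.testBit 1)))) →
      (CQ n).Adj (XM u m) (XM u m') := by
    rintro m m' x hx ⟨hm, hm', h1, h2, h3, h40⟩
    exact adjXM n hn u hu m m' x hm hm' (by omega) h1 h2 h3 h40 (fun h => absurd h (by omega))
  have NE : ∀ m m' : ℕ, m < 32 → m' < 32 → m ≠ m' → XM u m ≠ XM u m' :=
    fun m m' a b c => XM_ne n hn u a b c
  refine ⟨XM u 1, XM u 2, XM u 4, XM u 8, ?_, ?_, ?_, ?_,
    NE 1 2 (by norm_num) (by norm_num) (by norm_num),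
    NE 1 4 (by norm_num) (by norm_num) (by norm_num),
    NE 1 8 (by norm_num) (by norm_num) (by norm_num),
    NE 2 4 (by norm_num) (by norm_num) (by norm_num),
    NE 2 8 (by norm_num) (by norm_num) (by norm_num),
    NE 4 8 (by norm_num) (by norm_num) (by norm_num),
    ?_, ?_, ?_, ?_, ?_, ?_⟩
  · have h := E 0 1 0 (by norm_num) (by decide); rwa [XM_zero] at h
  · have h := E 0 2 1 (by norm_num) (by decide); rwa [XM_zero] at h
  · have h := E 0 4 2 (by norm_num) (by decide); rwa [XM_zero] at h
  · have h := E 0 8 3 (by norm_num) (by decide); rwa [XM_zero] at h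
  · -- w x : 1 — 7 — 6 — 2
    exact ⟨XM u 7, XM u 6, E 1 7 2 (by norm_num) (by decide),
      E 7 6 0 (by norm_num) (by decide), E 6 2 2 (by norm_num) (by decide),
      NE 1 7 (by norm_num) (by norm_num) (by norm_num),
      NE 1 6 (by norm_num) (by norm_num) (by norm_num),
      NE 1 2 (by norm_num) (by norm_num) (by norm_num),
      NE 7 6 (by norm_num) (by norm_num) (by norm_num),
      NE 7 2 (by norm_num) (by norm_num) (by norm_num),
      NE 6 2 (by norm_num) (by norm_num) (by norm_num)⟩
  · -- w y : 1 — 3 — 5 — 4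
    exact ⟨XM u 3, XM u 5, E 1 3 1 (by norm_num) (by decide),
      E 3 5 2 (by norm_num) (by decide), E 5 4 0 (by norm_num) (by decide),
      NE 1 3 (by norm_num) (by norm_num) (by norm_num),
      NE 1 5 (by norm_num) (by norm_num) (by norm_num),
      NE 1 4 (by norm_num) (by norm_num) (by norm_num),
      NE 3 5 (by norm_num) (by norm_num) (by norm_num),
      NE 3 4 (by norm_num) (by norm_num) (by norm_num),
      NE 5 4 (by norm_num) (by norm_num) (by norm_num)⟩
  · -- w z : 1 — 3 — 9 — 8
    exact ⟨XM u 3, XM u 9, E 1 3 1 (by norm_num) (by decide),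
      E 3 9 3 (by norm_num) (by decide), E 9 8 0 (by norm_num) (by decide),
      NE 1 3 (by norm_num) (by norm_num) (by norm_num),
      NE 1 9 (by norm_num) (by norm_num) (by norm_num),
      NE 1 8 (by norm_num) (by norm_num) (by norm_num),
      NE 3 9 (by norm_num) (by norm_num) (by norm_num),
      NE 3 8 (by norm_num) (by norm_num) (by norm_num),
      NE 9 8 (by norm_num) (by norm_num) (by norm_num)⟩
  · -- x y : 2 — 3 — 5 — 4
    exact ⟨XM u 3, XM u 5, E 2 3 0 (by norm_num) (by decide),
      E 3 5 2 (by norm_num) (by decide), E 5 4 0 (by norm_num) (by decide),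
      NE 2 3 (by norm_num) (by norm_num) (by norm_num),
      NE 2 5 (by norm_num) (by norm_num) (by norm_num),
      NE 2 4 (by norm_num) (by norm_num) (by norm_num),
      NE 3 5 (by norm_num) (by norm_num) (by norm_num),
      NE 3 4 (by norm_num) (by norm_num) (by norm_num),
      NE 5 4 (by norm_num) (by norm_num) (by norm_num)⟩
  · -- x z : 2 — 3 — 9 — 8
    exact ⟨XM u 3, XM u 9, E 2 3 0 (by norm_num) (by decide),
      E 3 9 3 (by norm_num) (by decide), E 9 8 0 (by norm_num) (by decide),
      NE 2 3 (by norm_num) (by norm_num) (by norm_num),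
      NE 2 9 (by norm_num) (by norm_num) (by norm_num),
      NE 2 8 (by norm_num) (by norm_num) (by norm_num),
      NE 3 9 (by norm_num) (by norm_num) (by norm_num),
      NE 3 8 (by norm_num) (by norm_num) (by norm_num),
      NE 9 8 (by norm_num) (by norm_num) (by norm_num)⟩
  · -- y z : depends on bit 2 of u
    cases hb2 : bitOf u 2 with
    | false =>
      -- 4 — 28 — 24 — 8
      exact ⟨XM u 28, XM u 24,
        adjXM n hn u hu 4 28 4 (by norm_num) (by norm_num) (by norm_num)
          (by decide) (by decide) (by decide) (by decide) (by rw [hb2]; decide),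
        E 28 24 2 (by norm_num) (by decide),
        adjXM n hn u hu 24 8 4 (by norm_num) (by norm_num) (by norm_num)
          (by decide) (by decide) (by decide) (by decide) (by rw [hb2]; decide),
        NE 4 28 (by norm_num) (by norm_num) (by norm_num),
        NE 4 24 (by norm_num) (by norm_num) (by norm_num),
        NE 4 8 (by norm_num) (by norm_num) (by norm_num),
        NE 28 24 (by norm_num) (by norm_num) (by norm_num),
        NE 28 8 (by norm_num) (by norm_num) (by norm_num),
        NE 24 8 (by norm_num) (by norm_num) (by norm_num)⟩
    | true =>
      -- 4 — 20 — 16 — 8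
      exact ⟨XM u 20, XM u 16,
        adjXM n hn u hu 4 20 4 (by norm_num) (by norm_num) (by norm_num)
          (by decide) (by decide) (by decide) (by decide) (by rw [hb2]; decide),
        E 20 16 2 (by norm_num) (by decide),
        adjXM n hn u hu 16 8 4 (by norm_num) (by norm_num) (by norm_num)
          (by decide) (by decide) (by decide) (by decide) (by rw [hb2]; decide),
        NE 4 20 (by norm_num) (by norm_num) (by norm_num),
        NE 4 16 (by norm_num) (by norm_num) (by norm_num),
        NE 4 8 (by norm_num) (by norm_num) (by norm_num),
        NE 20 16 (by norm_num) (by norm_num) (by norm_num),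
        NE 20 8 (by norm_num) (by norm_num) (by norm_num),
        NE 16 8 (by norm_num) (by norm_num) (by norm_num)⟩
end

section
/- For n ≥ 5, if u is an odd vertex of CQ_n (u_0 = 1), then the P₄-graph of the open neighborhood N(u) contains no clique on 4 vertices. -/
/-! ### Auxiliary lemmas for the K₄-freeness theorem -/

lemma pairRel_iff' (a₁ a₀ b₁ b₀ : Bool) :
    pairRel (a₁, a₀) (b₁, b₀) ↔ (b₀ = a₀ ∧ b₁ = xor a₀ a₁) := by
  cases a₁ <;> cases a₀ <;> cases b₁ <;> cases b₀ <;> simp [pairRel]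

lemma pairRel_elim {a₁ a₀ b₁ b₀ : Bool} (h : pairRel (a₁, a₀) (b₁, b₀)) :
    b₀ = a₀ ∧ b₁ = xor a₀ a₁ := (pairRel_iff' a₁ a₀ b₁ b₀).mp h

lemma adjAlong_symm {n : ℕ} {u v : Fin n → Bool} {x : ℕ} (h : adjAlong n u v x) :
    adjAlong n v u x := by
  obtain ⟨h1, h2, h3, h4, h5⟩ := h
  refine ⟨h1, by simp [h2], fun hx => (h3 hx).symm, fun i hi => (h4 i hi).symm, fun i hi => ?_⟩
  obtain ⟨e0, e1⟩ := pairRel_elim (h5 i hi)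
  rw [pairRel_iff']
  refine ⟨e0.symm, ?_⟩
  rw [e1, e0]
  cases bitOf u (2 * i) <;> cases bitOf u (2 * i + 1) <;> rfl

lemma adj_dim {n : ℕ} {u v : Fin n → Bool} (h : (CQ n).Adj u v) :
    ∃ x, adjAlong n u v x := by
  have h' : ∃ x, adjAlong n u v x ∨ adjAlong n v u x := h
  obtain ⟨x, h | h⟩ := h'
  exacts [⟨x, h⟩, ⟨x, adjAlong_symm h⟩]

lemma adjAlong_unique {n : ℕ} {u v w : Fin n → Bool} {a : ℕ}
    (hv : adjAlong n u v a) (hw : adjAlong n u w a) : v = w := by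
  obtain ⟨ha, hv2, hv3, hv4, hv5⟩ := hv
  obtain ⟨-, hw2, hw3, hw4, hw5⟩ := hw
  funext j
  have hj : (j : ℕ) < n := j.isLt
  have key : bitOf v (j : ℕ) = bitOf w (j : ℕ) := by
    rcases lt_trichotomy (j : ℕ) a with h | h | h
    · rcases Nat.mod_two_eq_zero_or_one (j : ℕ) with he | ho
      · by_cases hja : (j : ℕ) + 1 = a
        · have haodd : a % 2 = 1 := by omega
          have e1 := hv3 haodd
          have e2 := hw3 haodd
          have : a - 1 = (j : ℕ) := by omega
          rw [this] at e1 e2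
          rw [e1, e2]
        · have h1 : 2 * ((j : ℕ) / 2) + 1 < a := by omega
          have e1 := (pairRel_elim (hv5 _ h1)).1
          have e2 := (pairRel_elim (hw5 _ h1)).1
          have hj2 : 2 * ((j : ℕ) / 2) = (j : ℕ) := by omega
          rw [hj2] at e1 e2
          rw [e1, e2]
      · have h1 : 2 * ((j : ℕ) / 2) + 1 < a := by omega
        have e1 := (pairRel_elim (hv5 _ h1)).2
        have e2 := (pairRel_elim (hw5 _ h1)).2
        have e1' := (pairRel_elim (hv5 _ h1)).1
        have e2' := (pairRel_elim (hw5 _ h1)).1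
        have hj2 : 2 * ((j : ℕ) / 2) + 1 = (j : ℕ) := by omega
        rw [hj2] at e1 e2
        rw [e1, e2]
    · rw [h] at *
      rw [hv2, hw2]
    · rw [← hv4 _ h, ← hw4 _ h]
  have hvj : bitOf v (j : ℕ) = v j := by
    simp only [bitOf, dif_pos hj]
  have hwj : bitOf w (j : ℕ) = w j := by
    simp only [bitOf, dif_pos hj]
  rw [← hvj, ← hwj, key]

lemma low_of_high {n : ℕ} {u w : Fin n → Bool} {a : ℕ}
    (h : adjAlong n u w a) (ha : 2 ≤ a) :
    bitOf w 0 = bitOf u 0 ∧ bitOf w 1 = xor (bitOf u 0) (bitOf u 1) := by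
  obtain ⟨-, -, -, -, h5⟩ := h
  have hp := h5 0 (by omega)
  norm_num at hp
  exact ⟨(pairRel_elim hp).1, (pairRel_elim hp).2⟩

/-- Effect of one edge on the two low bits. -/
def stp (d : Fin 3) (p : Bool × Bool) : Bool × Bool :=
  if d = 0 then (p.1, !p.2) else if d = 1 then (!p.1, p.2) else (xor p.2 p.1, p.2)

lemma sm3 : ∀ (d1 d2 d3 : Fin 3) (c : Bool),
    stp d3 (stp d2 (stp d1 (c, true))) = (c, true) → d1 = 0 ∧ d2 = 2 ∧ d3 = 0 := by
  decide

lemma stepLow {n : ℕ} {u v : Fin n → Bool} {x : ℕ} (h : adjAlong n u v x) :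
    ∃ d : Fin 3, (bitOf v 1, bitOf v 0) = stp d (bitOf u 1, bitOf u 0) ∧
      (d = 0 → x = 0) ∧ (d = 2 → 2 ≤ x) := by
  obtain ⟨h1, h2, h3, h4, h5⟩ := h
  rcases (by omega : x = 0 ∨ x = 1 ∨ 2 ≤ x) with rfl | rfl | hx
  · exact ⟨0, by simp [stp, h2, (h4 1 one_pos).symm],
      fun _ => rfl, fun hc => absurd hc (by decide)⟩
  · refine ⟨1, ?_, fun hc => absurd hc (by decide), fun hc => absurd hc (by decide)⟩
    have e0 := h3 (by norm_num)
    norm_num at e0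
    simp [stp, h2, e0]
  · have hp := h5 0 (by omega)
    norm_num at hp
    have hp' := pairRel_elim hp
    refine ⟨2, ?_, fun hc => absurd hc (by decide), fun _ => hx⟩
    simp [stp, hp'.1, hp'.2]

lemma xor_not_ne (g h : Bool) : xor g (!h) ≠ xor g h := by
  cases g <;> cases h <;> decide

lemma noP4_high {n : ℕ} {u w x : Fin n → Bool} {a b : ℕ}
    (hu : bitOf u 0 = true) (ha : 2 ≤ a) (hab : a < b)
    (hw : adjAlong n u w a) (hx : adjAlong n u x b) : ¬ hasP4 n w x := by
  rintro ⟨s, t, A1, A2, A3, -⟩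
  obtain ⟨d1, h1⟩ := adj_dim A1
  obtain ⟨d2, h2⟩ := adj_dim A2
  obtain ⟨d3, h3⟩ := adj_dim A3
  obtain ⟨hw0, hw1⟩ := low_of_high hw ha
  obtain ⟨hx0, hx1⟩ := low_of_high hx (by omega)
  obtain ⟨e1, hs1, he10, -⟩ := stepLow h1
  obtain ⟨e2, hs2, -, he22⟩ := stepLow h2
  obtain ⟨e3, hs3, he30, -⟩ := stepLow h3
  have hw0' : bitOf w 0 = true := by rw [hw0, hu]
  have hx0' : bitOf x 0 = true := by rw [hx0, hu]
  have hx1' : bitOf x 1 = bitOf w 1 := by rw [hx1, hw1]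
  have hww : (bitOf x 1, bitOf x 0) = stp e3 (stp e2 (stp e1 (bitOf w 1, bitOf w 0))) := by
    rw [hs3, hs2, hs1]
  have key : stp e3 (stp e2 (stp e1 (bitOf w 1, true))) = (bitOf w 1, true) := by
    rw [← hw0', ← hww, hx1', hx0', hw0']
  obtain ⟨ke1, ke2, ke3⟩ := sm3 e1 e2 e3 _ key
  have hd1 : d1 = 0 := he10 ke1
  have hd2 : 2 ≤ d2 := he22 ke2
  have hd3 : d3 = 0 := he30 ke3
  subst hd1 hd3
  obtain ⟨-, -, -, g1, -⟩ := h1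
  obtain ⟨-, -, -, g3, -⟩ := h3
  obtain ⟨-, fw, ow, gw, pw⟩ := hw
  obtain ⟨hbn, fx, ox, gx, px⟩ := hx
  obtain ⟨-, f2, o2, g2, p2⟩ := h2
  -- Step 1 : d2 = b
  have hd2b : d2 = b := by
    rcases lt_trichotomy d2 b with h | h | h
    · have contra : bitOf u b = !(bitOf u b) :=
        calc bitOf u b = bitOf w b := gw b hab
          _ = bitOf s b := g1 b (by omega)
          _ = bitOf t b := g2 b h
          _ = bitOf x b := g3 b (by omega)
          _ = !(bitOf u b) := fx
      simp at contra
    · exact h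
    · have contra : bitOf s d2 = !(bitOf s d2) :=
        calc bitOf s d2 = bitOf w d2 := (g1 d2 (by omega)).symm
          _ = bitOf u d2 := (gw d2 (by omega)).symm
          _ = bitOf x d2 := gx d2 h
          _ = bitOf t d2 := (g3 d2 (by omega)).symm
          _ = !(bitOf s d2) := f2
      simp at contra
  rw [hd2b] at f2 o2 g2 p2
  -- Step 2 : contradiction at bit a
  have hsa : bitOf w a = bitOf s a := g1 a (by omega)
  have hta : bitOf t a = bitOf x a := g3 a (by omega)
  rcases Nat.mod_two_eq_zero_or_one a with hae | hao
  · -- a even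
    have hxa : bitOf x a = bitOf u a := by
      by_cases hja : a + 1 = b
      · have e := ox (by omega)
        have hb1 : b - 1 = a := by omega
        rwa [hb1] at e
      · have hp := pairRel_elim (px (a / 2) (by omega))
        have hj2 : 2 * (a / 2) = a := by omega
        rw [hj2] at hp
        exact hp.1
    have hts : bitOf t a = bitOf s a := by
      by_cases hja : a + 1 = b
      · have e := o2 (by omega)
        have hb1 : b - 1 = a := by omega
        rwa [hb1] at e
      · have hp := pairRel_elim (p2 (a / 2) (by omega))
        have hj2 : 2 * (a / 2) = a := by omega
        rw [hj2] at hp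
        exact hp.1
    have contra : bitOf u a = !(bitOf u a) :=
      calc bitOf u a = bitOf x a := hxa.symm
        _ = bitOf t a := hta.symm
        _ = bitOf s a := hts
        _ = bitOf w a := hsa.symm
        _ = !(bitOf u a) := fw
    simp at contra
  · -- a odd
    have hj1 : 2 * (a / 2) + 1 = a := by omega
    have hj0 : 2 * (a / 2) = a - 1 := by omega
    have hpx := pairRel_elim (px (a / 2) (by omega))
    rw [hj1, hj0] at hpx
    have hp2 := pairRel_elim (p2 (a / 2) (by omega))
    rw [hj1, hj0] at hp2
    have hsw1 : bitOf s (a - 1) = bitOf w (a - 1) := (g1 (a - 1) (by omega)).symm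
    have hwu1 : bitOf w (a - 1) = bitOf u (a - 1) := ow hao
    have e1 : bitOf t a = xor (bitOf u (a - 1)) (!(bitOf u a)) := by
      rw [hp2.2, hsw1, hwu1, ← hsa, fw]
    have e2 : bitOf t a = xor (bitOf u (a - 1)) (bitOf u a) := by
      rw [hta, hpx.2]
    exact xor_not_ne (bitOf u (a - 1)) (bitOf u a) (e1.symm.trans e2)

lemma hasP4_symm {n : ℕ} {w x : Fin n → Bool} (h : hasP4 n w x) : hasP4 n x w := by
  obtain ⟨a, b, h1, h2, h3, n1, n2, n3, n4, n5, n6⟩ := h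
  exact ⟨b, a, h3.symm, h2.symm, h1.symm,
    n6.symm, n5.symm, n3.symm, n4.symm, n2.symm, n1.symm⟩

/-- for `n ≥ 5` and an odd vertex `u` of `CQ n`, the `P₄`-graph of
`N(u)` contains no `K₄`. -/
theorem odd_vertex_P4_no_K4 (n : ℕ) (hn : 5 ≤ n) (u : Fin n → Bool)
    (hu : bitOf u 0 = true) :
    ¬ ∃ w x y z : Fin n → Bool,
      (CQ n).Adj u w ∧ (CQ n).Adj u x ∧ (CQ n).Adj u y ∧ (CQ n).Adj u z ∧
      w ≠ x ∧ w ≠ y ∧ w ≠ z ∧ x ≠ y ∧ x ≠ z ∧ y ≠ z ∧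
      hasP4 n w x ∧ hasP4 n w y ∧ hasP4 n w z ∧
      hasP4 n x y ∧ hasP4 n x z ∧ hasP4 n y z := by
  rintro ⟨w, x, y, z, aw, ax, ay, az, hwx, hwy, hwz, hxy, hxz, hyz,
    pwx, pwy, pwz, pxy, pxz, pyz⟩
  obtain ⟨da, haw⟩ := adj_dim aw
  obtain ⟨db, hax⟩ := adj_dim ax
  obtain ⟨dc, hay⟩ := adj_dim ay
  obtain ⟨dd, haz⟩ := adj_dim az
  have dwx : da ≠ db := fun h => hwx (adjAlong_unique haw (h ▸ hax))
  have dwy : da ≠ dc := fun h => hwy (adjAlong_unique haw (h ▸ hay))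
  have dwz : da ≠ dd := fun h => hwz (adjAlong_unique haw (h ▸ haz))
  have dxy : db ≠ dc := fun h => hxy (adjAlong_unique hax (h ▸ hay))
  have dxz : db ≠ dd := fun h => hxz (adjAlong_unique hax (h ▸ haz))
  have dyz : dc ≠ dd := fun h => hyz (adjAlong_unique hay (h ▸ haz))
  have key : ∀ {v1 v2 : Fin n → Bool} {e1 e2 : ℕ}, 2 ≤ e1 → 2 ≤ e2 → e1 ≠ e2 →
      adjAlong n u v1 e1 → adjAlong n u v2 e2 → hasP4 n v1 v2 → False := by
    intro v1 v2 e1 e2 he1 he2 hne hA1 hA2 hp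
    rcases lt_or_gt_of_ne hne with h | h
    · exact noP4_high hu he1 h hA1 hA2 hp
    · exact noP4_high hu he2 h hA2 hA1 (hasP4_symm hp)
  by_cases h1 : 2 ≤ da <;> by_cases h2 : 2 ≤ db <;>
    by_cases h3 : 2 ≤ dc <;> by_cases h4 : 2 ≤ dd <;>
  first
    | exact key h1 h2 dwx haw hax pwx
    | exact key h1 h3 dwy haw hay pwy
    | exact key h1 h4 dwz haw haz pwz
    | exact key h2 h3 dxy hax hay pxy
    | exact key h2 h4 dxz hax haz pxz
    | exact key h3 h4 dyz hay haz pyz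
    | omega
end

section
/- For n ≥ 5, every graph automorphism φ of CQ_n preserves vertex parity: φ maps odd vertices (u_0 = 1) to odd vertices and even vertices (u_0 = 0) to even vertices. -/
namespace CqAux

variable {n : ℕ}

/-- The neighbour of `u` along dimension `x`. -/
def T (n x : ℕ) (u : Fin n → Bool) : Fin n → Bool :=
  fun j => xor (u j)
    (decide ((j : ℕ) = x ∨ ((j : ℕ) % 2 = 1 ∧ (j : ℕ) < x ∧ bitOf u ((j : ℕ) - 1) = true)))

lemma bitOf_lt {u : Fin n → Bool} {i : ℕ} (h : i < n) : bitOf u i = u ⟨i, h⟩ := dif_pos h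

lemma bitOf_ge {u : Fin n → Bool} {i : ℕ} (h : ¬ i < n) : bitOf u i = false := dif_neg h

lemma eq_of_bitOf {u v : Fin n → Bool} (h : ∀ k, k < n → bitOf u k = bitOf v k) : u = v := by
  funext j
  have h2 := h j j.isLt
  rwa [bitOf_lt j.isLt, bitOf_lt j.isLt] at h2

lemma bit_T (x : ℕ) (u : Fin n → Bool) {k : ℕ} (hk : k < n) :
    bitOf (T n x u) k =
      xor (bitOf u k) (decide (k = x ∨ (k % 2 = 1 ∧ k < x ∧ bitOf u (k - 1) = true))) := by
  rw [bitOf_lt hk, bitOf_lt hk]; rfl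

lemma bit_T_even (x : ℕ) (u : Fin n → Bool) {k : ℕ} (h2 : k % 2 = 0) (hx : k ≠ x) :
    bitOf (T n x u) k = bitOf u k := by
  by_cases hk : k < n
  · have hne : ¬(k = x ∨ (k % 2 = 1 ∧ k < x ∧ bitOf u (k - 1) = true)) := by
      rintro (h | ⟨h, -, -⟩) <;> omega
    rw [bit_T x u hk, decide_eq_false hne, Bool.xor_false]
  · rw [bitOf_ge hk, bitOf_ge hk]

lemma decide_aux {m x : ℕ} {f g : Bool}
    (h : m % 2 = 1 → m < x → f = g) :
    decide (m = x ∨ (m % 2 = 1 ∧ m < x ∧ f = true)) =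
    decide (m = x ∨ (m % 2 = 1 ∧ m < x ∧ g = true)) := by
  apply decide_eq_decide.mpr
  constructor <;> rintro (h1 | ⟨h1, h2, h3⟩)
  · exact Or.inl h1
  · exact Or.inr ⟨h1, h2, by rw [← h h1 h2]; exact h3⟩
  · exact Or.inl h1
  · exact Or.inr ⟨h1, h2, by rw [h h1 h2]; exact h3⟩

lemma T_invol (x : ℕ) (u : Fin n → Bool) : T n x (T n x u) = u := by
  apply eq_of_bitOf; intro k hk
  rw [bit_T x _ hk, bit_T x u hk,
    decide_aux (fun h1 h2 => bit_T_even x u (by omega) (by omega)),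
    Bool.xor_assoc, Bool.xor_self, Bool.xor_false]

lemma T_comm (a b : ℕ) (H : ∀ k, k % 2 = 1 → k < a → k - 1 ≠ b)
    (H' : ∀ k, k % 2 = 1 → k < b → k - 1 ≠ a) (u : Fin n → Bool) :
    T n a (T n b u) = T n b (T n a u) := by
  apply eq_of_bitOf; intro k hk
  rw [bit_T a (T n b u) hk, bit_T b (T n a u) hk, bit_T b u hk, bit_T a u hk,
    decide_aux (fun h1 h2 => bit_T_even b u (by omega) (H k h1 h2)),
    decide_aux (fun h1 h2 => bit_T_even a u (by omega) (H' k h1 h2))]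
  have : ∀ (p q r : Bool), xor (xor p q) r = xor (xor p r) q := by decide
  exact this _ _ _

lemma CQ_adj {u v : Fin n → Bool} :
    (CQ n).Adj u v ↔ ∃ x, adjAlong n u v x ∨ adjAlong n v u x := Iff.rfl

lemma adjAlong_T (x : ℕ) (hx : x < n) (u : Fin n → Bool) : adjAlong n u (T n x u) x := by
  refine ⟨hx, ?_, ?_, ?_, ?_⟩
  · rw [bit_T x u hx, decide_eq_true (Or.inl rfl), Bool.xor_true]
  · intro hodd
    have h1 : x - 1 < n := by omega
    rw [bit_T x u h1, decide_eq_false (by rintro (h | ⟨h, -, -⟩) <;> omega), Bool.xor_false]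
  · intro i hi
    by_cases hin : i < n
    · rw [bit_T x u hin, decide_eq_false (by rintro (h | ⟨-, h, -⟩) <;> omega), Bool.xor_false]
    · rw [bitOf_ge hin, bitOf_ge hin]
  · intro i hi
    have hlt : 2 * i + 1 < n := by omega
    have hlt2 : 2 * i < n := by omega
    rw [bit_T x u hlt, bit_T x u hlt2,
      decide_eq_false (show ¬(2 * i = x ∨ (2 * i % 2 = 1 ∧ 2 * i < x ∧ bitOf u (2 * i - 1) = true))
        by rintro (h | ⟨h, -, -⟩) <;> omega), Bool.xor_false,
      show (2 * i + 1) - 1 = 2 * i from by omega]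
    by_cases hb : bitOf u (2 * i) = true
    · rw [decide_eq_true (Or.inr ⟨by omega, hi, hb⟩), Bool.xor_true, hb]
      cases hc : bitOf u (2 * i + 1) <;> simp [pairRel]
    · have hb' : bitOf u (2 * i) = false := by revert hb; cases bitOf u (2 * i) <;> simp
      have hd : ¬(2 * i + 1 = x ∨ ((2 * i + 1) % 2 = 1 ∧ 2 * i + 1 < x ∧ bitOf u (2 * i) = true)) := by
        rintro (h | ⟨-, -, h⟩)
        · omega
        · exact hb h
      rw [decide_eq_false hd, Bool.xor_false, hb']
      cases hc : bitOf u (2 * i + 1) <;> simp [pairRel]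

lemma adjAlong_eq {u v : Fin n → Bool} {x : ℕ} (h : adjAlong n u v x) : v = T n x u := by
  obtain ⟨hx, hbit, hodd, habove, hblocks⟩ := h
  apply eq_of_bitOf
  intro k hk
  rw [bit_T x u hk]
  rcases lt_trichotomy k x with hlt | rfl | hgt
  · by_cases ho : k % 2 = 1
    · have hi := hblocks (k / 2) (by omega)
      rw [show 2 * (k / 2) + 1 = k from by omega, show 2 * (k / 2) = k - 1 from by omega] at hi
      have hf : decide (k = x ∨ (k % 2 = 1 ∧ k < x ∧ bitOf u (k - 1) = true)) = bitOf u (k - 1) := by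
        cases hb : bitOf u (k - 1)
        · apply decide_eq_false
          rintro (h | ⟨-, -, h⟩)
          · omega
          · exact Bool.false_ne_true h
        · exact decide_eq_true (Or.inr ⟨ho, hlt, rfl⟩)
      rw [hf]
      rcases hi with ⟨ha, hb⟩ | ⟨ha, hb⟩ | ⟨ha, hb⟩ | ⟨ha, hb⟩ <;>
        rw [Prod.mk.injEq] at ha hb <;> rw [hb.1, ha.1, ha.2] <;> rfl
    · have hd : ¬(k = x ∨ (k % 2 = 1 ∧ k < x ∧ bitOf u (k - 1) = true)) := by
        rintro (h | ⟨h, -, -⟩)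
        · omega
        · exact ho h
      rw [decide_eq_false hd, Bool.xor_false]
      by_cases hk1 : k + 1 < x
      · have hi := hblocks (k / 2) (by omega)
        rw [show 2 * (k / 2) + 1 = k + 1 from by omega, show 2 * (k / 2) = k from by omega] at hi
        rcases hi with ⟨ha, hb⟩ | ⟨ha, hb⟩ | ⟨ha, hb⟩ | ⟨ha, hb⟩ <;>
          rw [Prod.mk.injEq] at ha hb <;> rw [hb.2, ha.2]
      · have hx1 : x = k + 1 := by omega
        have h2 := hodd (by omega)
        rw [show x - 1 = k from by omega] at h2
        exact h2
  · rw [decide_eq_true (Or.inl rfl), Bool.xor_true]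
    exact hbit
  · rw [decide_eq_false (by rintro (h | ⟨-, h, -⟩) <;> omega), Bool.xor_false]
    exact (habove k hgt).symm

lemma adjAlong_eq' {u v : Fin n → Bool} {x : ℕ} (h : adjAlong n v u x) : v = T n x u := by
  have h2 := adjAlong_eq h
  rw [h2, T_invol]

lemma adj_iff {u v : Fin n → Bool} : (CQ n).Adj u v ↔ ∃ x, x < n ∧ v = T n x u := by
  rw [CQ_adj]
  constructor
  · rintro ⟨x, h | h⟩
    · exact ⟨x, h.1, adjAlong_eq h⟩
    · exact ⟨x, h.1, adjAlong_eq' h⟩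
  · rintro ⟨x, hx, rfl⟩
    exact ⟨x, Or.inl (adjAlong_T x hx u)⟩

lemma bool_ne_not (b : Bool) : ¬ b = !b := by cases b <;> simp

lemma T_ne {s w : ℕ} (hs : s < n) (hw : w < n) (hsw : s ≠ w) (X : Fin n → Bool) :
    T n s X ≠ T n w X := by
  intro hEq
  rcases Nat.lt_or_ge s w with h | h
  · have hb := congrArg (fun t => bitOf t w) hEq
    rw [bit_T s X hw, bit_T w X hw,
      decide_eq_false (show ¬(w = s ∨ (w % 2 = 1 ∧ w < s ∧ bitOf X (w - 1) = true)) by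
        rintro (h2 | ⟨-, h2, -⟩) <;> omega),
      decide_eq_true (Or.inl rfl), Bool.xor_false, Bool.xor_true] at hb
    exact bool_ne_not _ hb
  · have h' : w < s := by omega
    have hb := congrArg (fun t => bitOf t s) hEq
    rw [bit_T s X hs, bit_T w X hs,
      decide_eq_true (Or.inl rfl),
      decide_eq_false (show ¬(s = w ∨ (s % 2 = 1 ∧ s < w ∧ bitOf X (s - 1) = true)) by
        rintro (h2 | ⟨-, h2, -⟩) <;> omega),
      Bool.xor_true, Bool.xor_false] at hb
    exact bool_ne_not _ hb.symm

lemma T_T_ne {s w : ℕ} (hs : s < n) (hw : w < n) (hsw : s ≠ w) (X : Fin n → Bool) :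
    T n w (T n s X) ≠ X := by
  intro hEq
  rcases Nat.lt_or_ge s w with h | h
  · have hb := congrArg (fun t => bitOf t w) hEq
    rw [bit_T w (T n s X) hw, decide_eq_true (Or.inl rfl), Bool.xor_true,
      bit_T s X hw,
      decide_eq_false (show ¬(w = s ∨ (w % 2 = 1 ∧ w < s ∧ bitOf X (w - 1) = true)) by
        rintro (h2 | ⟨-, h2, -⟩) <;> omega), Bool.xor_false] at hb
    exact bool_ne_not _ hb.symm
  · have h' : w < s := by omega
    have hb := congrArg (fun t => bitOf t s) hEq
    rw [bit_T w (T n s X) hs,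
      decide_eq_false (show ¬(s = w ∨ (s % 2 = 1 ∧ s < w ∧ bitOf (T n s X) (s - 1) = true)) by
        rintro (h2 | ⟨-, h2, -⟩) <;> omega), Bool.xor_false,
      bit_T s X hs, decide_eq_true (Or.inl rfl), Bool.xor_true] at hb
    exact bool_ne_not _ hb.symm

/-- A path with three edges from `x` to `y` whose inner vertices avoid the endpoints. -/
def P3 (n : ℕ) (x p q y : Fin n → Bool) : Prop :=
  (CQ n).Adj x p ∧ (CQ n).Adj p q ∧ (CQ n).Adj q y ∧ p ≠ y ∧ q ≠ x

/-- An edge joined by two distinct three-edge paths. -/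
def goodE (n : ℕ) (x y : Fin n → Bool) : Prop :=
  (CQ n).Adj x y ∧ ∃ p q p' q', P3 n x p q y ∧ P3 n x p' q' y ∧ p ≠ p'

/-- A directed 5-cycle through `u` all of whose edges are good. -/
def Pv (n : ℕ) (u : Fin n → Bool) : Prop :=
  ∃ a b c d, goodE n u a ∧ goodE n a b ∧ goodE n b c ∧ goodE n c d ∧ goodE n d u

lemma adj_T {x : ℕ} (hx : x < n) (u : Fin n → Bool) : (CQ n).Adj u (T n x u) :=
  CQ_adj.mpr ⟨x, Or.inl (adjAlong_T x hx u)⟩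

lemma goodE_of {w s s' : ℕ} (hw : w < n) (hs : s < n) (hs' : s' < n)
    (hsw : s ≠ w) (hs'w : s' ≠ w) (hss' : s ≠ s')
    (hc : ∀ Y : Fin n → Bool, T n s (T n w Y) = T n w (T n s Y))
    (hc' : ∀ Y : Fin n → Bool, T n s' (T n w Y) = T n w (T n s' Y))
    (X : Fin n → Bool) : goodE n X (T n w X) := by
  refine ⟨adj_T hw X, T n s X, T n w (T n s X), T n s' X, T n w (T n s' X),
    ⟨adj_T hs X, adj_T hw _, ?_, T_ne hs hw hsw X, T_T_ne hs hw hsw X⟩,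
    ⟨adj_T hs' X, adj_T hw _, ?_, T_ne hs' hw hs'w X, T_T_ne hs' hw hs'w X⟩,
    T_ne hs hs' hss' X⟩
  · have he : T n s (T n w (T n s X)) = T n w X := by rw [hc, T_invol]
    exact adj_iff.mpr ⟨s, hs, he.symm⟩
  · have he : T n s' (T n w (T n s' X)) = T n w X := by rw [hc', T_invol]
    exact adj_iff.mpr ⟨s', hs', he.symm⟩

lemma key1 (hn : 5 ≤ n) {u p q : Fin n → Bool}
    (h1 : (CQ n).Adj u p) (h2 : (CQ n).Adj p q) (h3 : (CQ n).Adj q (T n 0 u))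
    (hpv : p ≠ T n 0 u) (hqu : q ≠ u) : p = T n 1 u := by
  obtain ⟨x, hx, rfl⟩ := adj_iff.mp h1
  obtain ⟨y, hy, rfl⟩ := adj_iff.mp h2
  obtain ⟨z, hz, hzv⟩ := adj_iff.mp h3
  have h0n : (0 : ℕ) < n := by omega
  have h1n : (1 : ℕ) < n := by omega
  have flip0 : ∀ (a : ℕ) (v : Fin n → Bool),
      bitOf (T n a v) 0 = xor (bitOf v 0) (decide (a = 0)) := by
    intro a v
    rw [bit_T a v h0n]
    congr 1
    apply decide_eq_decide.mpr
    constructor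
    · rintro (h | ⟨h, -, -⟩)
      · exact h.symm
      · omega
    · rintro h
      exact Or.inl h.symm
  by_cases hx0 : x = 0
  · subst hx0; exact absurd rfl hpv
  by_cases hz0 : z = 0
  · subst hz0
    have h4 := congrArg (T n 0) hzv
    rw [T_invol, T_invol] at h4
    exact absurd h4.symm hqu
  have hbit := congrArg (fun t => bitOf t 0) hzv
  rw [flip0 0 u, flip0 z _, flip0 y _, flip0 x u,
    decide_eq_true rfl, decide_eq_false hx0, decide_eq_false hz0,
    Bool.xor_false, Bool.xor_false, Bool.xor_true] at hbit
  by_cases hy0 : y = 0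
  swap
  · rw [decide_eq_false hy0, Bool.xor_false] at hbit
    exact absurd hbit.symm (bool_ne_not _)
  subst hy0
  rcases lt_trichotomy x z with hlt | heq | hgt
  · exfalso
    have hb := congrArg (fun t => bitOf t z) hzv
    rw [bit_T 0 u hz, bit_T z _ hz, bit_T 0 _ hz, bit_T x u hz] at hb
    simp only [hz0, show ¬(z = x) from by omega, show ¬(z < x) from by omega,
      Nat.not_lt_zero, false_and, and_false, or_false, false_or, decide_false,
      Bool.xor_false, decide_true, eq_self_iff_true, true_or, or_true,
      Bool.xor_true] at hb
    exact bool_ne_not _ hb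
  · subst heq
    by_cases hx1 : x = 1
    · subst hx1; rfl
    exfalso
    have hx2 : 2 ≤ x := by omega
    have hb := congrArg (fun t => bitOf t 1) hzv
    rw [bit_T 0 u h1n, bit_T x _ h1n, bit_T 0 _ h1n, bit_T x u h1n] at hb
    have e1 : bitOf (T n 0 (T n x u)) 0 = !(bitOf u 0) := by
      rw [flip0 0 _, flip0 x u, decide_eq_true rfl, decide_eq_false hx0,
        Bool.xor_false, Bool.xor_true]
    simp only [show (1 : ℕ) - 1 = 0 from rfl] at hb
    rw [e1] at hb
    cases hu0 : bitOf u 0 <;>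
      simp only [hu0, show ¬((1:ℕ) = x) from by omega, show (1:ℕ) < x from by omega,
        Nat.not_lt_zero, Bool.not_false, Bool.not_true, Nat.one_mod,
        false_and, and_false, and_true, true_and, or_false, false_or, or_true,
        decide_false, decide_true, Bool.xor_false, Bool.xor_true,
        show ((false : Bool) = true) = False from by simp,
        show ((true : Bool) = true) = True from by simp,
        show ((1:ℕ) = 0) = False from by simp, show ((1:ℕ) % 2 = 1) = True from by simp] at hb <;>
      exact bool_ne_not _ hb
  · exfalso
    have hb := congrArg (fun t => bitOf t x) hzv
    rw [bit_T 0 u hx, bit_T z _ hx, bit_T 0 _ hx, bit_T x u hx] at hb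
    simp only [hx0, show ¬(x = z) from by omega, show ¬(x < z) from by omega,
      Nat.not_lt_zero, false_and, and_false, or_false, false_or, decide_false,
      Bool.xor_false, decide_true, eq_self_iff_true, true_or, or_true,
      Bool.xor_true] at hb
    exact bool_ne_not _ hb

lemma good_step (hn : 5 ≤ n) {xv yv : Fin n → Bool} (g : goodE n xv yv) :
    bitOf yv 0 = bitOf xv 0 ∧ (bitOf xv 0 = true → bitOf yv 1 = !(bitOf xv 1)) := by
  obtain ⟨hadj, p, q, p', q', ⟨hxp, hpq, hqy, hpy, hqx⟩, ⟨hxp', hpq', hqy', hpy', hqx'⟩, hpp'⟩ := g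
  obtain ⟨w, hw, rfl⟩ := adj_iff.mp hadj
  by_cases hw0 : w = 0
  · subst hw0
    have e1 := key1 hn hxp hpq hqy hpy hqx
    have e2 := key1 hn hxp' hpq' hqy' hpy' hqx'
    rw [e1, e2] at hpp'
    exact absurd rfl hpp'
  constructor
  · rw [bit_T w xv (by omega),
      decide_eq_false (show ¬((0:ℕ) = w ∨ ((0:ℕ) % 2 = 1 ∧ 0 < w ∧ bitOf xv (0 - 1) = true)) by
        rintro (h | ⟨h, -, -⟩) <;> omega), Bool.xor_false]
  · intro hx0
    have h1n : (1 : ℕ) < n := by omega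
    rw [bit_T w xv h1n]
    by_cases hw1 : w = 1
    · rw [decide_eq_true (Or.inl hw1.symm), Bool.xor_true]
    · rw [decide_eq_true (show (1:ℕ) = w ∨ ((1:ℕ) % 2 = 1 ∧ 1 < w ∧ bitOf xv (1 - 1) = true) from
        Or.inr ⟨rfl, by omega, by rw [show (1:ℕ) - 1 = 0 from rfl]; exact hx0⟩), Bool.xor_true]

lemma thmB (hn : 5 ≤ n) (u : Fin n → Bool) (h : Pv n u) : bitOf u 0 = false := by
  obtain ⟨a, b, c, d, g1, g2, g3, g4, g5⟩ := h
  have e1 := good_step hn g1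
  have e2 := good_step hn g2
  have e3 := good_step hn g3
  have e4 := good_step hn g4
  have e5 := good_step hn g5
  cases hu : bitOf u 0 with
  | false => rfl
  | true =>
    exfalso
    have ha0 : bitOf a 0 = true := by rw [e1.1, hu]
    have hb0 : bitOf b 0 = true := by rw [e2.1, ha0]
    have hc0 : bitOf c 0 = true := by rw [e3.1, hb0]
    have hd0 : bitOf d 0 = true := by rw [e4.1, hc0]
    have f5 := e5.2 hd0
    rw [e4.2 hc0, e3.2 hb0, e2.2 ha0, e1.2 hu] at f5
    simp at f5

lemma S2gen (v : Fin n → Bool) (h0 : bitOf v 0 = false) :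
    ∀ k, k < n → bitOf (T n 2 v) k = xor (bitOf v k) (decide (k = 2)) := by
  intro k hk
  rw [bit_T 2 v hk]
  congr 1
  apply decide_eq_decide.mpr
  constructor
  · rintro (h | ⟨h1, h2, h3⟩)
    · exact h
    · exfalso
      have hk1 : k = 1 := by omega
      subst hk1
      rw [show (1 : ℕ) - 1 = 0 from rfl, h0] at h3
      exact Bool.false_ne_true h3
  · intro h
    exact Or.inl h

lemma S3gen (v : Fin n → Bool) (h0 : bitOf v 0 = false) :
    ∀ k, k < n → bitOf (T n 3 v) k = xor (bitOf v k) (decide (k = 3)) := by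
  intro k hk
  rw [bit_T 3 v hk]
  congr 1
  apply decide_eq_decide.mpr
  constructor
  · rintro (h | ⟨h1, h2, h3⟩)
    · exact h
    · exfalso
      have hk1 : k = 1 := by omega
      subst hk1
      rw [show (1 : ℕ) - 1 = 0 from rfl, h0] at h3
      exact Bool.false_ne_true h3
  · intro h
    exact Or.inl h

lemma S4genT (v : Fin n → Bool) (h0 : bitOf v 0 = false) (h2 : bitOf v 2 = true) :
    ∀ k, k < n → bitOf (T n 4 v) k = xor (bitOf v k) (decide (k = 4 ∨ k = 3)) := by
  intro k hk
  rw [bit_T 4 v hk]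
  congr 1
  apply decide_eq_decide.mpr
  constructor
  · rintro (h | ⟨h1, hlt, h3⟩)
    · exact Or.inl h
    · rcases (show k = 1 ∨ k = 3 from by omega) with rfl | rfl
      · exfalso
        rw [show (1 : ℕ) - 1 = 0 from rfl, h0] at h3
        exact Bool.false_ne_true h3
      · exact Or.inr rfl
  · rintro (rfl | rfl)
    · exact Or.inl rfl
    · exact Or.inr ⟨rfl, by omega, by rw [show (3 : ℕ) - 1 = 2 from rfl]; exact h2⟩

lemma S4genF (v : Fin n → Bool) (h0 : bitOf v 0 = false) (h2 : bitOf v 2 = false) :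
    ∀ k, k < n → bitOf (T n 4 v) k = xor (bitOf v k) (decide (k = 4)) := by
  intro k hk
  rw [bit_T 4 v hk]
  congr 1
  apply decide_eq_decide.mpr
  constructor
  · rintro (h | ⟨h1, hlt, h3⟩)
    · exact h
    · exfalso
      rcases (show k = 1 ∨ k = 3 from by omega) with rfl | rfl
      · rw [show (1 : ℕ) - 1 = 0 from rfl, h0] at h3
        exact Bool.false_ne_true h3
      · rw [show (3 : ℕ) - 1 = 2 from rfl, h2] at h3
        exact Bool.false_ne_true h3
  · intro h
    exact Or.inl h

lemma pentagon (hn : 5 ≤ n) (w : Fin n → Bool) (hw0 : bitOf w 0 = false)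
    (hw2 : bitOf w 2 = false) : Pv n w ∧ Pv n (T n 2 w) := by
  have h0n : (0 : ℕ) < n := by omega
  have h1n : (1 : ℕ) < n := by omega
  have h2n : (2 : ℕ) < n := by omega
  have h3n : (3 : ℕ) < n := by omega
  have h4n : (4 : ℕ) < n := by omega
  have c12 : ∀ Y : Fin n → Bool, T n 1 (T n 2 Y) = T n 2 (T n 1 Y) :=
    T_comm 1 2 (by intro k hk1 hk2; omega) (by intro k hk1 hk2; omega)
  have c32 : ∀ Y : Fin n → Bool, T n 3 (T n 2 Y) = T n 2 (T n 3 Y) :=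
    T_comm 3 2 (by intro k hk1 hk2; omega) (by intro k hk1 hk2; omega)
  have c14 : ∀ Y : Fin n → Bool, T n 1 (T n 4 Y) = T n 4 (T n 1 Y) :=
    T_comm 1 4 (by intro k hk1 hk2; omega) (by intro k hk1 hk2; omega)
  have c34 : ∀ Y : Fin n → Bool, T n 3 (T n 4 Y) = T n 4 (T n 3 Y) :=
    T_comm 3 4 (by intro k hk1 hk2; omega) (by intro k hk1 hk2; omega)
  have c13 : ∀ Y : Fin n → Bool, T n 1 (T n 3 Y) = T n 3 (T n 1 Y) :=
    T_comm 1 3 (by intro k hk1 hk2; omega) (by intro k hk1 hk2; omega)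
  have c43 : ∀ Y : Fin n → Bool, T n 4 (T n 3 Y) = T n 3 (T n 4 Y) := fun Y => (c34 Y).symm
  have g1 : goodE n w (T n 2 w) :=
    goodE_of h2n h1n h3n (by omega) (by omega) (by omega) c12 c32 w
  have g2 : goodE n (T n 2 w) (T n 4 (T n 2 w)) :=
    goodE_of h4n h1n h3n (by omega) (by omega) (by omega) c14 c34 _
  have g3 : goodE n (T n 4 (T n 2 w)) (T n 3 (T n 4 (T n 2 w))) :=
    goodE_of h3n h1n h4n (by omega) (by omega) (by omega) c13 c43 _
  have g4 : goodE n (T n 3 (T n 4 (T n 2 w))) (T n 2 (T n 3 (T n 4 (T n 2 w)))) :=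
    goodE_of h2n h1n h3n (by omega) (by omega) (by omega) c12 c32 _
  have g5' : goodE n (T n 2 (T n 3 (T n 4 (T n 2 w))))
      (T n 4 (T n 2 (T n 3 (T n 4 (T n 2 w))))) :=
    goodE_of h4n h1n h3n (by omega) (by omega) (by omega) c14 c34 _
  have b1_0 : bitOf (T n 2 w) 0 = false := by
    rw [S2gen w hw0 0 h0n, hw0]; simp
  have b1_2 : bitOf (T n 2 w) 2 = true := by
    rw [S2gen w hw0 2 h2n, hw2]; simp
  have b2_0 : bitOf (T n 4 (T n 2 w)) 0 = false := by
    rw [S4genT _ b1_0 b1_2 0 h0n, b1_0]; simp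
  have b2_2 : bitOf (T n 4 (T n 2 w)) 2 = true := by
    rw [S4genT _ b1_0 b1_2 2 h2n, b1_2]; simp
  have b3_0 : bitOf (T n 3 (T n 4 (T n 2 w))) 0 = false := by
    rw [S3gen _ b2_0 0 h0n, b2_0]; simp
  have b3_2 : bitOf (T n 3 (T n 4 (T n 2 w))) 2 = true := by
    rw [S3gen _ b2_0 2 h2n, b2_2]; simp
  have b4_0 : bitOf (T n 2 (T n 3 (T n 4 (T n 2 w)))) 0 = false := by
    rw [S2gen _ b3_0 0 h0n, b3_0]; simp
  have b4_2 : bitOf (T n 2 (T n 3 (T n 4 (T n 2 w)))) 2 = false := by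
    rw [S2gen _ b3_0 2 h2n, b3_2]; simp
  have hA : T n 4 (T n 2 (T n 3 (T n 4 (T n 2 w)))) = w := by
    apply eq_of_bitOf
    intro k hk
    rw [S4genF _ b4_0 b4_2 k hk, S2gen _ b3_0 k hk, S3gen _ b2_0 k hk,
      S4genT _ b1_0 b1_2 k hk, S2gen w hw0 k hk]
    by_cases e2 : k = 2
    · subst e2; simp
    by_cases e3 : k = 3
    · subst e3; simp
    by_cases e4 : k = 4
    · subst e4; simp
    simp [e2, e3, e4]
  have g5 : goodE n (T n 2 (T n 3 (T n 4 (T n 2 w)))) w := by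
    have h5 := g5'
    rwa [hA] at h5
  constructor
  · exact ⟨_, _, _, _, g1, g2, g3, g4, g5⟩
  · exact ⟨_, _, _, _, g2, g3, g4, g5, g1⟩

lemma thmA (hn : 5 ≤ n) (u : Fin n → Bool) (h0 : bitOf u 0 = false) : Pv n u := by
  by_cases h2 : bitOf u 2 = true
  · have hw0 : bitOf (T n 2 u) 0 = false := by
      rw [bit_T 2 u (by omega),
        decide_eq_false (show ¬((0:ℕ) = 2 ∨ ((0:ℕ) % 2 = 1 ∧ (0:ℕ) < 2 ∧
            bitOf u (0 - 1) = true)) by rintro (h | ⟨h, -, -⟩) <;> omega),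
        Bool.xor_false]
      exact h0
    have hw2 : bitOf (T n 2 u) 2 = false := by
      rw [bit_T 2 u (by omega), decide_eq_true (Or.inl rfl), Bool.xor_true, h2]
      rfl
    have hp := (pentagon hn (T n 2 u) hw0 hw2).2
    rwa [T_invol] at hp
  · have h2' : bitOf u 2 = false := by revert h2; cases bitOf u 2 <;> simp
    exact (pentagon hn u h0 h2').1

lemma Pv_map (φ : CQ n ≃g CQ n) {u : Fin n → Bool} (h : Pv n u) : Pv n (φ u) := by
  have hinj : Function.Injective φ := φ.toEquiv.injective
  have gm : ∀ x y : Fin n → Bool, goodE n x y → goodE n (φ x) (φ y) := by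
    rintro x y ⟨hadj, p, q, p', q', ⟨a1, a2, a3, a4, a5⟩, ⟨b1, b2, b3, b4, b5⟩, hpp'⟩
    exact ⟨φ.map_adj_iff.mpr hadj, φ p, φ q, φ p', φ q',
      ⟨φ.map_adj_iff.mpr a1, φ.map_adj_iff.mpr a2, φ.map_adj_iff.mpr a3,
        fun he => a4 (hinj he), fun he => a5 (hinj he)⟩,
      ⟨φ.map_adj_iff.mpr b1, φ.map_adj_iff.mpr b2, φ.map_adj_iff.mpr b3,
        fun he => b4 (hinj he), fun he => b5 (hinj he)⟩,
      fun he => hpp' (hinj he)⟩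
  obtain ⟨a, b, c, d, g1, g2, g3, g4, g5⟩ := h
  exact ⟨φ a, φ b, φ c, φ d, gm _ _ g1, gm _ _ g2, gm _ _ g3, gm _ _ g4, gm _ _ g5⟩

end CqAux


/-- for `n ≥ 5`, every automorphism of `CQ n` preserves the parity
(the least significant bit) of every vertex. -/
theorem aut_preserves_parity (n : ℕ) (hn : 5 ≤ n) (φ : CQ n ≃g CQ n)
    (u : Fin n → Bool) :
    bitOf (φ u) 0 = bitOf u 0 := by
  have key : ∀ (ψ : CQ n ≃g CQ n) (v : Fin n → Bool),
      bitOf v 0 = false → bitOf (ψ v) 0 = false :=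
    fun ψ v hv => CqAux.thmB hn _ (CqAux.Pv_map ψ (CqAux.thmA hn v hv))
  cases hu : bitOf u 0 with
  | false => rw [key φ u hu]
  | true =>
    cases hphi : bitOf (φ u) 0 with
    | true => rfl
    | false =>
      exfalso
      have h2 := key φ.symm (φ u) hphi
      rw [RelIso.symm_apply_apply] at h2
      rw [hu] at h2
      exact absurd h2 (by simp)
end

section
/- Let n ≥ 5, let φ be an automorphism of CQ_n, and suppose φ(u) = v where u and v have the same two least significant bits pattern as described. Then for k ∈ {0, 1}, φ maps the k-th neighbor of u to the k-th neighbor of v; i.e., if u' is the vertex adjacent to u along dimension k, then φ(u') is adjacent to v along dimension k. -/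
namespace CQaux

variable {n : ℕ}

lemma bitOf_out (u : Fin n → Bool) {j : ℕ} (hj : n ≤ j) : bitOf u j = false := by
  simp [bitOf, Nat.not_lt.mpr hj]

lemma bitOf_lt (u : Fin n → Bool) {j : ℕ} (hj : j < n) : bitOf u j = u ⟨j, hj⟩ := by
  simp [bitOf, hj]

lemma eq_of_bitOf {u v : Fin n → Bool} (h : ∀ j, j < n → bitOf u j = bitOf v j) : u = v := by
  funext j
  have := h j j.isLt
  rwa [bitOf_lt u j.isLt, bitOf_lt v j.isLt] at this

/-- The neighbor of `u` along dimension `x`. -/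
def N (n x : ℕ) (u : Fin n → Bool) : Fin n → Bool :=
  fun j => if (j : ℕ) = x then !(u j)
    else if (j : ℕ) % 2 = 1 ∧ (j : ℕ) < x then Bool.xor (u j) (bitOf u ((j : ℕ) - 1))
    else u j

lemma bitOf_N (x : ℕ) (u : Fin n → Bool) {j : ℕ} (hj : j < n) :
    bitOf (N n x u) j =
      if j = x then !(bitOf u j)
      else if j % 2 = 1 ∧ j < x then Bool.xor (bitOf u j) (bitOf u (j - 1))
      else bitOf u j := by
  simp [bitOf, N, hj]

lemma bitOf_N_self {x : ℕ} (u : Fin n → Bool) (hx : x < n) :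
    bitOf (N n x u) x = !(bitOf u x) := by
  rw [bitOf_N x u hx, if_pos rfl]

lemma bitOf_N_gt {x j : ℕ} (u : Fin n → Bool) (hj : x < j) :
    bitOf (N n x u) j = bitOf u j := by
  by_cases h : j < n
  · rw [bitOf_N x u h, if_neg (by omega), if_neg (by omega)]
  · rw [bitOf_out _ (by omega), bitOf_out _ (by omega)]

lemma bitOf_N_odd {x j : ℕ} (u : Fin n → Bool) (hj : j % 2 = 1) (hjx : j < x) (hjn : j < n) :
    bitOf (N n x u) j = Bool.xor (bitOf u j) (bitOf u (j - 1)) := by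
  rw [bitOf_N x u hjn, if_neg (by omega), if_pos ⟨hj, hjx⟩]

lemma bitOf_N_other {x j : ℕ} (u : Fin n → Bool) (h1 : j ≠ x) (h2 : ¬(j % 2 = 1 ∧ j < x)) :
    bitOf (N n x u) j = bitOf u j := by
  by_cases h : j < n
  · rw [bitOf_N x u h, if_neg h1, if_neg h2]
  · rw [bitOf_out _ (by omega), bitOf_out _ (by omega)]

lemma pairRel_xor (a b : Bool) : pairRel (a, b) (Bool.xor a b, b) := by
  cases a <;> cases b <;> simp [pairRel]

lemma adjAlong_N {x : ℕ} (u : Fin n → Bool) (hx : x < n) : adjAlong n u (N n x u) x := by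
  refine ⟨hx, bitOf_N_self u hx, ?_, ?_, ?_⟩
  · intro hodd
    exact bitOf_N_other u (by omega) (by omega)
  · intro i hi
    exact (bitOf_N_gt u hi).symm
  · intro i hi
    rw [bitOf_N_odd u (by omega) hi (by omega), bitOf_N_other u (by omega) (by omega)]
    exact pairRel_xor _ _

end CQaux
namespace CQaux

variable {n : ℕ}

lemma pairRel_snd {a b c d : Bool} (h : pairRel (a, b) (c, d)) :
    c = Bool.xor a b ∧ d = b := by
  rcases h with ⟨h1, h2⟩ | ⟨h1, h2⟩ | ⟨h1, h2⟩ | ⟨h1, h2⟩ <;>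
    simp only [Prod.mk.injEq] at h1 h2 <;>
    simp [h1.1, h1.2, h2.1, h2.2]

lemma eq_N_of_adjAlong {u v : Fin n → Bool} {x : ℕ} (h : adjAlong n u v x) :
    v = N n x u := by
  obtain ⟨hx, hflip, hodd, habove, hpair⟩ := h
  apply eq_of_bitOf
  intro j hj
  rcases Nat.lt_trichotomy j x with hlt | heq | hgt
  · by_cases hpar : j % 2 = 1
    · rw [bitOf_N_odd u hpar hlt hj]
      have hp := hpair (j / 2) (by omega)
      have e1 : 2 * (j / 2) + 1 = j := by omega
      have e2 : 2 * (j / 2) = j - 1 := by omega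
      rw [e1, e2] at hp
      exact (pairRel_snd hp).1
    · rw [bitOf_N_other u (by omega) (by omega)]
      by_cases hx1 : x % 2 = 1 ∧ j = x - 1
      · rw [hx1.2]
        exact hodd hx1.1
      · have hj1 : 2 * (j / 2) + 1 < x := by omega
        have hp := hpair (j / 2) hj1
        have e2 : 2 * (j / 2) = j := by omega
        rw [e2] at hp
        exact (pairRel_snd hp).2
  · rw [heq, bitOf_N_self u hx, hflip]
  · rw [bitOf_N_gt u hgt]
    exact (habove j hgt).symm

lemma adjAlong_iff {u v : Fin n → Bool} {x : ℕ} :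
    adjAlong n u v x ↔ x < n ∧ v = N n x u :=
  ⟨fun h => ⟨h.1, eq_N_of_adjAlong h⟩, by rintro ⟨h1, rfl⟩; exact adjAlong_N u h1⟩

lemma xor_xor_cancel (a b : Bool) : Bool.xor (Bool.xor a b) b = a := by
  cases a <;> cases b <;> rfl

lemma N_invol (x : ℕ) (u : Fin n → Bool) : N n x (N n x u) = u := by
  apply eq_of_bitOf
  intro j hj
  by_cases h1 : j = x
  · subst h1
    rw [bitOf_N_self _ hj, bitOf_N_self _ hj, Bool.not_not]
  · by_cases h2 : j % 2 = 1 ∧ j < x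
    · rw [bitOf_N_odd _ h2.1 h2.2 hj, bitOf_N_odd u h2.1 h2.2 hj,
        bitOf_N_other u (by omega) (by omega), xor_xor_cancel]
    · rw [bitOf_N_other _ h1 h2, bitOf_N_other u h1 h2]

lemma dim_unique {u v : Fin n → Bool} {x y : ℕ} (h1 : adjAlong n u v x)
    (h2 : adjAlong n u v y) : x = y := by
  rcases Nat.lt_trichotomy x y with h | h | h
  · have e1 := h1.2.2.2.1 y h
    have e2 := h2.2.1
    rw [e1] at e2
    exact absurd e2 (by cases bitOf v y <;> simp)
  · exact h
  · have e1 := h2.2.2.2.1 x h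
    have e2 := h1.2.1
    rw [e1] at e2
    exact absurd e2 (by cases bitOf v x <;> simp)

lemma N_inj_dim {u : Fin n → Bool} {x y : ℕ} (hx : x < n) (hy : y < n)
    (h : N n x u = N n y u) : x = y := by
  have h2 : adjAlong n u (N n x u) y := by rw [h]; exact adjAlong_N u hy
  exact dim_unique (adjAlong_N u hx) h2

lemma adjAlong_symm {u v : Fin n → Bool} {x : ℕ} (h : adjAlong n u v x) :
    adjAlong n v u x := by
  obtain ⟨hx, hv⟩ := adjAlong_iff.mp h
  subst hv
  exact adjAlong_iff.mpr ⟨hx, (N_invol x u).symm⟩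

lemma adj_iff {u v : Fin n → Bool} : (CQ n).Adj u v ↔ ∃ x, adjAlong n u v x := by
  constructor
  · rintro ⟨x, h | h⟩
    · exact ⟨x, h⟩
    · exact ⟨x, adjAlong_symm h⟩
  · rintro ⟨x, h⟩
    exact ⟨x, Or.inl h⟩

lemma adj_exists {u v : Fin n → Bool} (h : (CQ n).Adj u v) :
    ∃ x, x < n ∧ adjAlong n u v x := by
  obtain ⟨x, hx⟩ := adj_iff.mp h
  exact ⟨x, hx.1, hx⟩

lemma adj_N {x : ℕ} (u : Fin n → Bool) (hx : x < n) : (CQ n).Adj u (N n x u) :=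
  adj_iff.mpr ⟨x, adjAlong_N u hx⟩

end CQaux
namespace CQaux

variable {n : ℕ}

lemma not_xor (a b : Bool) : Bool.not (Bool.xor a b) = Bool.xor (Bool.not a) b := by
  cases a <;> cases b <;> rfl

lemma N_comm {x y : ℕ} (hy : y < n) (hxy : x < y) (hc : x % 2 = 1 ∨ y = x + 1)
    (u : Fin n → Bool) : N n x (N n y u) = N n y (N n x u) := by
  have hx : x < n := lt_trans hxy hy
  apply eq_of_bitOf
  intro j hj
  by_cases h1 : j = x
  · subst h1
    rw [bitOf_N_self _ hx]
    by_cases hp : j % 2 = 1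
    · rw [bitOf_N_odd u hp hxy hj, bitOf_N_odd _ hp hxy hj, bitOf_N_self u hj,
        bitOf_N_other u (by omega) (by omega)]
      exact not_xor _ _
    · rw [bitOf_N_other u (by omega) (by omega), bitOf_N_other _ (by omega) (by omega),
        bitOf_N_self u hj]
  · by_cases h2 : j = y
    · subst h2
      rw [bitOf_N_gt _ hxy, bitOf_N_self u hj, bitOf_N_self _ hj, bitOf_N_gt u hxy]
    · by_cases h3 : j % 2 = 1 ∧ j < x
      · rw [bitOf_N_odd _ h3.1 h3.2 hj, bitOf_N_odd u h3.1 (by omega) hj,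
          bitOf_N_other u (by omega) (by omega), xor_xor_cancel,
          bitOf_N_odd _ h3.1 (by omega) hj, bitOf_N_odd u h3.1 h3.2 hj,
          bitOf_N_other u (by omega) (by omega), xor_xor_cancel]
      · by_cases h4 : j % 2 = 1 ∧ x < j ∧ j < y
        · have hjx : x < j - 1 := by omega
          rw [bitOf_N_other _ h1 (by omega), bitOf_N_odd u h4.1 h4.2.2 hj,
            bitOf_N_odd _ h4.1 h4.2.2 hj, bitOf_N_other u h1 (by omega),
            bitOf_N_other u (by omega) (by omega)]
        · rw [bitOf_N_other _ h1 h3, bitOf_N_other u h2 (by omega),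
            bitOf_N_other _ h2 (by omega), bitOf_N_other u h1 h3]

lemma bitOf_NN_gt {p q j : ℕ} (u : Fin n → Bool) (hj : max p q < j) :
    bitOf (N n q (N n p u)) j = bitOf u j := by
  rw [bitOf_N_gt _ (by omega), bitOf_N_gt u (by omega)]

lemma bitOf_NN_max {p q : ℕ} (u : Fin n → Bool) (hp : p < n) (hq : q < n) (hpq : p ≠ q) :
    bitOf (N n q (N n p u)) (max p q) = !(bitOf u (max p q)) := by
  rcases Nat.lt_or_gt_of_ne hpq with h | h
  · rw [max_eq_right (le_of_lt h), bitOf_N_self _ hq, bitOf_N_gt u h]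
  · rw [max_eq_left (le_of_lt h), bitOf_N_gt _ h, bitOf_N_self u hp]

lemma bool_ne_not (a : Bool) : a ≠ !a := by cases a <;> simp

lemma caseC {m p s : ℕ} {u : Fin n → Bool} (hm : m < n) (hp : p < m) (hs : s < m)
    (h : N n m (N n p u) = N n s (N n m u)) : p = s ∧ (p % 2 = 1 ∨ m = p + 1) := by
  have hb : ∀ j, bitOf (N n m (N n p u)) j = bitOf (N n s (N n m u)) j := fun j => by rw [h]
  have hpn : p < n := by omega
  have hsn : s < n := by omega
  by_cases hse : s % 2 = 1
  · -- s odd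
    have hps : p = s := by
      by_contra hne
      by_cases hpe : p % 2 = 1
      · rcases Nat.lt_or_gt_of_ne hne with hlt | hlt
        · -- p < s : contradiction at bit s
          have e := hb s
          rw [bitOf_N_odd _ hse hs hsn, bitOf_N_other u (by omega) (by omega),
            bitOf_N_other u (by omega) (by omega), bitOf_N_self _ hsn,
            bitOf_N_odd u hse hs hsn] at e
          exact absurd e (by cases bitOf u s <;> cases bitOf u (s-1) <;> simp_all)
        · -- s < p : contradiction at bit p
          have e := hb p
          rw [bitOf_N_odd _ hpe hp hpn, bitOf_N_self u hpn,
            bitOf_N_other u (by omega) (by omega),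
            bitOf_N_other _ (by omega) (by omega), bitOf_N_odd u hpe hp hpn] at e
          exact absurd e (by cases bitOf u p <;> cases bitOf u (p-1) <;> simp_all)
      · -- p even : contradiction at bit p
        have e := hb p
        rw [bitOf_N_other _ (by omega) (by omega), bitOf_N_self u hpn,
          bitOf_N_other _ (by omega) (by omega), bitOf_N_other u (by omega) (by omega)] at e
        exact absurd e (by cases bitOf u p <;> simp_all)
    exact ⟨hps, Or.inl (hps ▸ hse)⟩
  · -- s even : first p = s
    have hps : p = s := by
      by_contra hne
      have e := hb s
      rw [bitOf_N_other _ (by omega) (by omega), bitOf_N_other u (by omega) (by omega),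
        bitOf_N_self _ hsn, bitOf_N_other u (by omega) (by omega)] at e
      exact absurd e (by cases bitOf u s <;> simp_all)
    subst hps
    by_cases hm1 : m = p + 1
    · exact ⟨rfl, Or.inr hm1⟩
    exfalso
    have hp1 : p + 1 < m := by omega
    have hp1n : p + 1 < n := by omega
    have e := hb (p + 1)
    rw [bitOf_N_odd _ (by omega) hp1 hp1n] at e
    simp only [Nat.add_sub_cancel] at e
    rw [bitOf_N_other u (by omega) (by omega), bitOf_N_self u hpn,
      bitOf_N_other (N n m u) (by omega) (by omega),
      bitOf_N_odd u (by omega) hp1 hp1n] at e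
    simp only [Nat.add_sub_cancel] at e
    exact absurd e (by cases bitOf u (p+1) <;> cases bitOf u p <;> simp_all)

end CQaux
namespace CQaux

variable {n : ℕ}

lemma two_path {p q r s : ℕ} {u : Fin n → Bool} (hp : p < n) (hq : q < n) (hr : r < n)
    (hs : s < n) (hpq : p ≠ q) (hrs : r ≠ s)
    (h : N n q (N n p u) = N n s (N n r u)) :
    (p = r ∧ q = s) ∨
    (p = s ∧ q = r ∧ (min p q % 2 = 1 ∨ max p q = min p q + 1)) := by
  have hb : ∀ j, bitOf (N n q (N n p u)) j = bitOf (N n s (N n r u)) j := fun j => by rw [h]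
  have hmax : max p q = max r s := by
    by_contra hne
    rcases Nat.lt_or_gt_of_ne hne with hlt | hlt
    · have e := hb (max r s)
      rw [bitOf_NN_gt u hlt, bitOf_NN_max u hr hs hrs] at e
      exact bool_ne_not _ e
    · have e := hb (max p q)
      rw [bitOf_NN_gt u hlt, bitOf_NN_max u hp hq hpq] at e
      exact bool_ne_not _ e.symm
  rcases Nat.lt_or_gt_of_ne hpq with h1 | h1 <;> rcases Nat.lt_or_gt_of_ne hrs with h2 | h2
  · -- p < q, r < s : q = s
    have hqs : q = s := by
      have := hmax
      rw [max_eq_right h1.le, max_eq_right h2.le] at this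
      exact this
    subst hqs
    have h' := congrArg (N n q) h
    rw [N_invol, N_invol] at h'
    exact Or.inl ⟨N_inj_dim hp hr h', rfl⟩
  · -- p < q, s < r : q = r, use caseC
    have hqr : q = r := by
      have := hmax
      rw [max_eq_right h1.le, max_eq_left h2.le] at this
      exact this
    subst hqr
    obtain ⟨hps, hcond⟩ := caseC hq h1 h2 h
    refine Or.inr ⟨hps, rfl, ?_⟩
    rw [min_eq_left h1.le, max_eq_right h1.le]
    exact hcond
  · -- q < p, r < s : p = s, use caseC (swapped)
    have hps : p = s := by
      have := hmax
      rw [max_eq_left h1.le, max_eq_right h2.le] at this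
      exact this
    subst hps
    obtain ⟨hrq, hcond⟩ := caseC hp h2 h1 h.symm
    refine Or.inr ⟨rfl, hrq.symm, ?_⟩
    rw [min_eq_right h1.le, max_eq_left h1.le]
    rw [hrq] at hcond
    exact hcond
  · -- q < p, s < r : p = r
    have hpr : p = r := by
      have := hmax
      rw [max_eq_left h1.le, max_eq_left h2.le] at this
      exact this
    subst hpr
    exact Or.inl ⟨rfl, N_inj_dim hq hs h⟩

end CQaux
namespace CQaux

variable {n : ℕ}

/-- Edge `{u,w}` extends every edge at `u` to a 4-cycle (characterizes dimension-1 edges). -/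
def Dom (n : ℕ) (u w : Fin n → Bool) : Prop :=
  (CQ n).Adj u w ∧ ∀ a, (CQ n).Adj u a → a ≠ w →
    ∃ b, b ≠ u ∧ (CQ n).Adj a b ∧ (CQ n).Adj b w

/-- Every 4-cycle through edge `{u,w}` starts with a `Dom` edge (characterizes dimension-0). -/
def Zed (n : ℕ) (u w : Fin n → Bool) : Prop :=
  (CQ n).Adj u w ∧ ∀ a b, (CQ n).Adj u a → a ≠ w → b ≠ u →
    (CQ n).Adj a b → (CQ n).Adj b w → Dom n u a

lemma dom_of_one {u w : Fin n → Bool} (hn : 5 ≤ n) (h : adjAlong n u w 1) : Dom n u w := by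
  have h1n : (1 : ℕ) < n := by omega
  have hw : w = N n 1 u := eq_N_of_adjAlong h
  refine ⟨adj_iff.mpr ⟨1, h⟩, ?_⟩
  intro a ha hane
  obtain ⟨p, hpn, hpa⟩ := adj_exists ha
  have hap : a = N n p u := eq_N_of_adjAlong hpa
  have hp1 : p ≠ 1 := fun e => hane (by rw [hap, e, ← hw])
  refine ⟨N n 1 a, ?_, adj_N a h1n, ?_⟩
  · intro e
    apply hane
    rw [hw, ← e, N_invol]
  · have hcomm : N n 1 (N n p u) = N n p (N n 1 u) := by
      rcases Nat.eq_zero_or_pos p with rfl | hp0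
      · exact (N_comm h1n (by omega) (Or.inr rfl) u).symm
      · exact N_comm hpn (by omega) (Or.inl rfl) u
    have : N n 1 a = N n p w := by rw [hap, hcomm, hw]
    rw [this]
    exact (adj_N w hpn).symm

lemma not_dom {u a : Fin n → Bool} {y : ℕ} (hn : 5 ≤ n) (hy : adjAlong n u a y)
    (hy1 : y ≠ 1) : ¬ Dom n u a := by
  rintro ⟨-, hdom⟩
  have hyn : y < n := hy.1
  have ha : a = N n y u := eq_N_of_adjAlong hy
  obtain ⟨p, hpn, hpy, hcnd⟩ :
      ∃ p, p < n ∧ p ≠ y ∧ ¬(min p y % 2 = 1 ∨ max p y = min p y + 1) := by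
    rcases eq_or_ne y 0 with rfl | h0
    · exact ⟨2, by omega, by omega, by omega⟩
    · exact ⟨0, by omega, by omega, by omega⟩
  obtain ⟨b, hbu, hab, hba⟩ := hdom (N n p u) (adj_N u hpn)
    (fun e => hpy (N_inj_dim hpn hyn (ha ▸ e)))
  obtain ⟨q, hqn, hqb⟩ := adj_exists hab
  have hbq : b = N n q (N n p u) := eq_N_of_adjAlong hqb
  obtain ⟨r, hrn, hrb⟩ := adj_exists hba.symm
  have hbr : b = N n r (N n y u) := by rw [eq_N_of_adjAlong hrb, ha]
  have hqp : p ≠ q := fun e => hbu (by rw [hbq, ← e, N_invol])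
  have hry : y ≠ r := fun e => hbu (by rw [hbr, ← e, N_invol])
  have h2p := two_path hpn hqn hyn hrn hqp hry (by rw [← hbq, hbr])
  rcases h2p with ⟨e1, -⟩ | ⟨-, e2, hcond⟩
  · exact hpy e1
  · rw [← e2] at hcnd
    exact hcnd hcond
end CQaux
namespace CQaux

variable {n : ℕ}

lemma zed_of_zero {u w : Fin n → Bool} (hn : 5 ≤ n) (h : adjAlong n u w 0) : Zed n u w := by
  refine ⟨adj_iff.mpr ⟨0, h⟩, ?_⟩
  intro a b hua haw hbu hab hbw
  have hw : w = N n 0 u := eq_N_of_adjAlong h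
  obtain ⟨p, hpn, hpa⟩ := adj_exists hua
  have ha : a = N n p u := eq_N_of_adjAlong hpa
  obtain ⟨q, hqn, hqb⟩ := adj_exists hab
  have hbq : b = N n q (N n p u) := by rw [eq_N_of_adjAlong hqb, ha]
  obtain ⟨r, hrn, hrb⟩ := adj_exists hbw.symm
  have hbr : b = N n r (N n 0 u) := by rw [eq_N_of_adjAlong hrb, hw]
  have hp0 : p ≠ 0 := fun e => haw (by rw [ha, e, ← hw])
  have hpq : p ≠ q := fun e => hbu (by rw [hbq, ← e, N_invol])
  have h0r : (0 : ℕ) ≠ r := fun e => hbu (by rw [hbr, ← e, N_invol])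
  have h2p := two_path hpn hqn (by omega : 0 < n) hrn hpq h0r (by rw [← hbq, hbr])
  rcases h2p with ⟨e1, -⟩ | ⟨-, e2, hcond⟩
  · exact absurd e1 hp0
  · have hp1 : p = 1 := by
      rw [e2] at hcond
      omega
    exact dom_of_one hn (hp1 ▸ hpa)

lemma zed_killer {u w : Fin n → Bool} {d y : ℕ} (hn : 5 ≤ n) (hz : Zed n u w)
    (hd : adjAlong n u w d) (hyn : y < n) (hyd : y ≠ d) (hy1 : y ≠ 1)
    (hcomm : N n d (N n y u) = N n y (N n d u)) : False := by
  have hw : w = N n d u := eq_N_of_adjAlong hd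
  have hdn : d < n := hd.1
  have h2 : N n y u ≠ w := by
    rw [hw]
    exact fun e => hyd (N_inj_dim hyn hdn e)
  have h3 : N n d (N n y u) ≠ u := by
    rw [hcomm, ← hw]
    intro e
    apply h2
    rw [← e, N_invol]
  have h5 : (CQ n).Adj (N n d (N n y u)) w := by
    rw [hcomm, ← hw]
    exact (adj_N w hyn).symm
  have hdom := hz.2 (N n y u) (N n d (N n y u)) (adj_N u hyn) h2 h3 (adj_N _ hdn) h5
  exact not_dom hn (adjAlong_N u hyn) hy1 hdom

lemma not_zed {u w : Fin n → Bool} {d : ℕ} (hn : 5 ≤ n) (hd : adjAlong n u w d)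
    (hd0 : d ≠ 0) : ¬ Zed n u w := by
  intro hz
  have hdn : d < n := hd.1
  rcases eq_or_ne d 1 with rfl | hd1
  · exact zed_killer hn hz hd (by omega : 2 < n) (by omega) (by omega)
      (N_comm (by omega) (by omega) (Or.inl rfl) u)
  rcases Nat.even_or_odd d with he | ho
  · have hd2 : 2 ≤ d := by
      rcases he with ⟨c, hc⟩; omega
    rcases eq_or_ne d 2 with rfl | hd2'
    · exact zed_killer hn hz hd (by omega : 3 < n) (by omega) (by omega)
        (N_comm (by omega) (by omega) (Or.inr rfl) u)
    · have h4 : 4 ≤ d := by rcases he with ⟨c, hc⟩; omega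
      exact zed_killer hn hz hd (by omega : 3 < n) (by omega) (by omega)
        (N_comm hdn (by omega) (Or.inl rfl) u).symm
  · have h3 : 3 ≤ d := by rcases ho with ⟨c, hc⟩; omega
    exact zed_killer hn hz hd (by omega : d - 1 < n) (by omega) (by omega)
      (N_comm hdn (by omega) (Or.inr (by omega)) u).symm

lemma dom_map (φ : CQ n ≃g CQ n) {u w : Fin n → Bool} (h : Dom n u w) :
    Dom n (φ u) (φ w) := by
  obtain ⟨hadj, hd⟩ := h
  refine ⟨φ.map_rel_iff.mpr hadj, ?_⟩
  intro a' ha' hne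
  obtain ⟨a, rfl⟩ := φ.surjective a'
  obtain ⟨b, hbu, hab, hbw⟩ := hd a (φ.map_rel_iff.mp ha') (fun e => hne (by rw [e]))
  exact ⟨φ b, fun e => hbu (φ.injective e), φ.map_rel_iff.mpr hab,
    φ.map_rel_iff.mpr hbw⟩

lemma zed_map (φ : CQ n ≃g CQ n) {u w : Fin n → Bool} (h : Zed n u w) :
    Zed n (φ u) (φ w) := by
  obtain ⟨hadj, hz⟩ := h
  refine ⟨φ.map_rel_iff.mpr hadj, ?_⟩
  intro a' b' h1 h2 h3 h4 h5
  obtain ⟨a, rfl⟩ := φ.surjective a'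
  obtain ⟨b, rfl⟩ := φ.surjective b'
  have := hz a b (φ.map_rel_iff.mp h1) (fun e => h2 (by rw [e]))
    (fun e => h3 (by rw [e])) (φ.map_rel_iff.mp h4) (φ.map_rel_iff.mp h5)
  exact dom_map φ this

end CQaux

/-- for `n ≥ 5`, an automorphism `φ` with `φ(u) = v` maps the `k`-th
neighbor of `u` to the `k`-th neighbor of `v`, for `k ∈ {0, 1}`. -/
theorem aut_preserves_low_neighbors (n : ℕ) (hn : 5 ≤ n) (φ : CQ n ≃g CQ n)
    (u v : Fin n → Bool) (huv : φ u = v) (k : ℕ) (hk : k = 0 ∨ k = 1)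
    (u' : Fin n → Bool) (hu' : adjAlong n u u' k) :
    adjAlong n v (φ u') k := by
  rcases hk with rfl | rfl
  · have hz : CQaux.Zed n (φ u) (φ u') := CQaux.zed_map φ (CQaux.zed_of_zero hn hu')
    rw [huv] at hz
    obtain ⟨d, hdn, hd⟩ := CQaux.adj_exists hz.1
    rcases eq_or_ne d 0 with rfl | hne
    · exact hd
    · exact absurd hz (CQaux.not_zed hn hd hne)
  · have hz : CQaux.Dom n (φ u) (φ u') := CQaux.dom_map φ (CQaux.dom_of_one hn hu')
    rw [huv] at hz
    obtain ⟨d, hdn, hd⟩ := CQaux.adj_exists hz.1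
    rcases eq_or_ne d 1 with rfl | hne
    · exact hd
    · exact absurd hz (CQaux.not_dom hn hd hne)
end
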